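/- arXiv:1708.00846 — 11 statements merged into one kernel-verified Lean document; each statement's English description precedes it below -/
import Mathlib

section
/- Let R be a commutative ring and r ∈ R. Then the localization R[r^{-1}] (the localization of R at the multiplicative set of powers of r), viewed as an R-module, has projective dimension at most 1. -/
/-!
`R[r⁻¹]` is `R[X] ⧸ (rX - 1)` as an `R`-algebra, and `rX - 1` is a non-zero-divisor of `R[X]`
because its constant coefficient is the unit `-1`. Hence multiplication by `rX - 1` gives a resolution
`0 → R[X] → R[X] → R[r⁻¹] → 0` by free `R`-modules.
-/

open CategoryTheory Polynomial
open scoped nonZeroDivisors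

universe u v

section QuotientSpanSingleton

variable (R : Type u) [CommRing R] {A : Type v} [CommRing A] [Algebra R A]

lemma exact_mulRight_quotient_mk (a : A) :
    Function.Exact (LinearMap.mulRight R a) (Ideal.Quotient.mkₐ R (Ideal.span {a})).toLinearMap := by
  intro x
  simp only [AlgHom.toLinearMap_apply, Ideal.Quotient.mkₐ_eq_mk, Ideal.Quotient.eq_zero_iff_mem,
    Ideal.mem_span_singleton', Set.mem_range, LinearMap.mulRight_apply]

lemma mulRight_injective_of_mem_nonZeroDivisors {a : A} (ha : a ∈ A⁰) :
    Function.Injective (LinearMap.mulRight R a) :=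
  fun _ _ h => (mul_cancel_right_mem_nonZeroDivisors ha).mp h

theorem exists_projective_shortExact_of_linearEquiv_quotient_span_singleton
    {M : Type v} [AddCommGroup M] [Module R M] [Module.Projective R A]
    {a : A} (ha : a ∈ A⁰) (e : (A ⧸ Ideal.span {a}) ≃ₗ[R] M) :
    ∃ (P Q : ModuleCat R) (f : Q ⟶ P) (g : P ⟶ ModuleCat.of R M),
      Projective P ∧ Projective Q ∧
        Function.Injective f ∧ Function.Surjective g ∧ Function.Exact f g := by
  refine ⟨ModuleCat.of R A, ModuleCat.of R A, ModuleCat.ofHom (LinearMap.mulRight R a),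
    ModuleCat.ofHom (e.toLinearMap ∘ₗ (Ideal.Quotient.mkₐ R (Ideal.span {a})).toLinearMap),
    inferInstance, inferInstance, mulRight_injective_of_mem_nonZeroDivisors R ha,
    e.surjective.comp Ideal.Quotient.mk_surjective, ?_⟩
  exact e.postcomp_exact_iff_exact.mpr (exact_mulRight_quotient_mk R a)

end QuotientSpanSingleton

lemma Polynomial.C_mul_X_sub_one_mem_nonZeroDivisors {R : Type*} [CommRing R] (r : R) :
    C r * X - 1 ∈ R[X]⁰ :=
  mem_nonzeroDivisors_of_coeff_mem 0 (by simpa using isUnit_one.neg.mem_nonZeroDivisors)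

/-- For a commutative ring `R` and `r ∈ R`, the localization `R[r⁻¹]`
has projective dimension at most 1 as an `R`-module: there is a short exact sequence
`0 ⟶ Q ⟶ P ⟶ R[r⁻¹] ⟶ 0` with `P`, `Q` projective `R`-modules. -/
theorem projectiveDimension_le_one_of_localization_away
    (R : Type) [CommRing R] (r : R) :
    ∃ (P Q : ModuleCat R) (f : Q ⟶ P) (g : P ⟶ ModuleCat.of R (Localization.Away r)),
      Projective P ∧ Projective Q ∧
        Function.Injective f ∧ Function.Surjective g ∧ Function.Exact f g :=
  exists_projective_shortExact_of_linearEquiv_quotient_span_singleton R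
    (C_mul_X_sub_one_mem_nonZeroDivisors r) (Localization.awayEquivAdjoin r).symm.toLinearEquiv
end

section
/- Let R be a commutative ring, r ∈ R, and C an R-module that is a transfinitely iterated extension in the sense of the projective limit of R-modules D_α (i.e., there is a continuous well-ordered decreasing filtration by quotients with successive kernels D_α). If F is an R-module with Ext^1_R(F, D_α) = 0 for all α, then Ext^1_R(F, C) = 0. -/
/-!
Fix a projective resolution `P₂ → P₁ → P₀ → F`. Then `Ext¹(F, M) = 0` says that every map
`g : P₁ → M` killing the image of `P₂` factors through `d : P₁ → P₀`. Given such a `g` into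
`C δ`, consider the partial factorisations `P₀ → C α` of the composites `P₁ → C δ → C α`,
ordered by compatibility. A chain of them glues at limit stages because `C β` is the inverse
limit of the earlier stages; a factorisation at a stage `α < δ` extends to `α + 1` by lifting it
along the surjection `C (α + 1) → C α` (projectivity of `P₀`) and correcting the error, a map
into `D α`, with `Ext¹(F, D α) = 0`. By Zorn's lemma a maximal partial factorisation exists, and
it must live at stage `δ`.
-/

open CategoryTheory

universe u v

lemma CategoryTheory.ProjectiveResolution.subsingleton_ext_one_iff {R : Type u} [CommRing R]
    {F : ModuleCat.{u} R} (P : ProjectiveResolution F) (M : ModuleCat.{u} R) :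
    Subsingleton (((Ext R (ModuleCat.{u} R) 1).obj (Opposite.op F)).obj M) ↔
      ∀ g : P.complex.X 1 →ₗ[R] M, g ∘ₗ (P.complex.d 2 1).hom = 0 →
        ∃ h : P.complex.X 0 →ₗ[R] M, h ∘ₗ (P.complex.d 1 0).hom = g := by
  rw [← ModuleCat.isZero_iff_subsingleton, (P.isoExt 1 M).isZero_iff,
    ← HomologicalComplex.exactAt_iff_isZero_homology,
    HomologicalComplex.exactAt_iff' _ 0 1 2 (by simp) (by simp), ShortComplex.moduleCat_exact_iff]
  refine ⟨fun h g hg => ?_, fun h g hg => ?_⟩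
  · obtain ⟨u, hu⟩ := h (ModuleCat.ofHom g) (ModuleCat.hom_ext hg)
    exact ⟨u.hom, congrArg ModuleCat.Hom.hom hu⟩
  · obtain ⟨u, hu⟩ := h g.hom (congrArg ModuleCat.Hom.hom hg)
    exact ⟨ModuleCat.ofHom u, ModuleCat.hom_ext hu⟩

section

variable {R : Type*} [Ring R] {A B P₀ P₁ P₂ : Type*} [AddCommGroup A] [Module R A]
  [AddCommGroup B] [Module R B] [AddCommGroup P₀] [Module R P₀] [AddCommGroup P₁] [Module R P₁]
  [AddCommGroup P₂] [Module R P₂]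

theorem exists_lift_of_surjective [Module.Projective R P₀] {q : B →ₗ[R] A}
    (hq : Function.Surjective q) {d : P₁ →ₗ[R] P₀} {d₂ : P₂ →ₗ[R] P₁} (hd : d ∘ₗ d₂ = 0)
    (hker : ∀ w : P₁ →ₗ[R] LinearMap.ker q, w ∘ₗ d₂ = 0 → ∃ u : P₀ →ₗ[R] LinearMap.ker q,
      u ∘ₗ d = w)
    {f : P₀ →ₗ[R] A} {g : P₁ →ₗ[R] B} (hg : g ∘ₗ d₂ = 0) (hfg : f ∘ₗ d = q ∘ₗ g) :
    ∃ h : P₀ →ₗ[R] B, q ∘ₗ h = f ∧ h ∘ₗ d = g := by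
  obtain ⟨t, ht⟩ := Module.projective_lifting_property q f hq
  have hw : ∀ y, (g - t ∘ₗ d) y ∈ LinearMap.ker q := fun y => by
    simp [← LinearMap.comp_apply q t, ht, ← LinearMap.comp_apply q g, ← hfg]
  obtain ⟨u, hu⟩ := hker ((g - t ∘ₗ d).codRestrict _ hw) <| by
    ext z
    simp [← LinearMap.comp_apply g d₂, ← LinearMap.comp_apply d d₂, hg, hd]
  refine ⟨t + (LinearMap.ker q).subtype ∘ₗ u, ?_, ?_⟩
  · ext x
    simp [← LinearMap.comp_apply q t, ht]
  · ext y
    simp [← LinearMap.comp_apply u d, hu]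

end

namespace DualEklof

variable {R : Type*} [Ring R] {C : Ordinal.{u} → Type v} [∀ α, AddCommGroup (C α)]
  [∀ α, Module R (C α)] (π : ∀ α β : Ordinal.{u}, α ≤ β → C β →ₗ[R] C α)

def TransitionsCompose : Prop :=
  ∀ (α β γ : Ordinal.{u}) (h₁ : α ≤ β) (h₂ : β ≤ γ),
    (π α β h₁).comp (π β γ h₂) = π α γ (h₁.trans h₂)

def IsLimitStage (β : Ordinal.{u}) : Prop :=
  ∀ g : ∀ α : {a : Ordinal.{u} // a < β}, C α,
    (∀ (α₁ α₂ : {a : Ordinal.{u} // a < β}) (h : α₁.1 ≤ α₂.1), π α₁ α₂ h (g α₂) = g α₁) →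
    ∃! x : C β, ∀ α : {a : Ordinal.{u} // a < β}, π α β α.2.le x = g α

variable {π}

theorem TransitionsCompose.apply (hπ : TransitionsCompose π) {α β γ : Ordinal.{u}}
    (h₁ : α ≤ β) (h₂ : β ≤ γ) (x : C γ) : π α β h₁ (π β γ h₂ x) = π α γ (h₁.trans h₂) x :=
  LinearMap.congr_fun (hπ α β γ h₁ h₂) x

section Limit

variable {P : Type*} [AddCommGroup P] [Module R P] {β : Ordinal.{u}}

theorem IsLimitStage.linearMap_ext (hβ : IsLimitStage π β) (hπ : TransitionsCompose π)
    {f₁ f₂ : P →ₗ[R] C β}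
    (h : ∀ α : {a : Ordinal.{u} // a < β}, π α β α.2.le ∘ₗ f₁ = π α β α.2.le ∘ₗ f₂) :
    f₁ = f₂ := by
  ext x
  exact (hβ (fun α => π α β α.2.le (f₂ x)) (fun α₁ α₂ h => hπ.apply _ _ _)).unique
    (fun α => LinearMap.congr_fun (h α) x) (fun α => rfl)

theorem IsLimitStage.exists_linearMap (hβ : IsLimitStage π β)
    (f : ∀ α : {a : Ordinal.{u} // a < β}, P →ₗ[R] C α)
    (hf : ∀ (α₁ α₂ : {a : Ordinal.{u} // a < β}) (h : α₁.1 ≤ α₂.1),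
      π α₁ α₂ h ∘ₗ f α₂ = f α₁) :
    ∃ F : P →ₗ[R] C β, ∀ α : {a : Ordinal.{u} // a < β}, π α β α.2.le ∘ₗ F = f α := by
  choose s hs hs_unique using fun x =>
    hβ (fun α => f α x) (fun α₁ α₂ h => LinearMap.congr_fun (hf α₁ α₂ h) x)
  refine ⟨{ toFun := s, map_add' := fun x y => ?_, map_smul' := fun r x => ?_ },
    fun α => LinearMap.ext fun x => hs x α⟩
  · exact (hs_unique _ _ fun α => by simp [hs]).symm
  · exact (hs_unique _ _ fun α => by simp [hs]).symm

end Limit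

variable {P₀ P₁ : Type*} [AddCommGroup P₀] [Module R P₀] [AddCommGroup P₁] [Module R P₁]
  {d : P₁ →ₗ[R] P₀} {δ : Ordinal.{u}} {g : P₁ →ₗ[R] C δ}

variable (π d g) in
structure PartialLift where
  idx : Ordinal.{u}
  idx_le : idx ≤ δ
  f : P₀ →ₗ[R] C idx
  f_comp : f ∘ₗ d = π idx δ idx_le ∘ₗ g

namespace PartialLift

def proj (p : PartialLift π d g) (α : Ordinal.{u}) (h : α ≤ p.idx) : P₀ →ₗ[R] C α :=
  π α p.idx h ∘ₗ p.f

-- Comparing all common projections, rather than asking `π p.idx q.idx ∘ q.f = p.f`, makes this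
-- a preorder without using `π α α = id`.
instance : Preorder (PartialLift π d g) where
  le p q := p.idx ≤ q.idx ∧ ∀ α (hp : α ≤ p.idx) (hq : α ≤ q.idx), p.proj α hp = q.proj α hq
  le_refl p := ⟨le_rfl, fun _ _ _ => rfl⟩
  le_trans p q r hpq hqr :=
    ⟨hpq.1.trans hqr.1, fun α hp hr =>
      (hpq.2 α hp (hp.trans hpq.1)).trans (hqr.2 α (hp.trans hpq.1) hr)⟩

theorem proj_comp_proj (hπ : TransitionsCompose π) (p : PartialLift π d g) {α β : Ordinal.{u}}
    (h : α ≤ β) (hβ : β ≤ p.idx) : π α β h ∘ₗ p.proj β hβ = p.proj α (h.trans hβ) := by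
  rw [proj, ← LinearMap.comp_assoc, hπ, proj]

theorem proj_comp (hπ : TransitionsCompose π) (p : PartialLift π d g) (α : Ordinal.{u})
    (h : α ≤ p.idx) : p.proj α h ∘ₗ d = π α δ (h.trans p.idx_le) ∘ₗ g := by
  rw [proj, LinearMap.comp_assoc, p.f_comp, ← LinearMap.comp_assoc, hπ]

theorem le_of_proj_eq (hπ : TransitionsCompose π) {p q : PartialLift π d g}
    (h : p.idx ≤ q.idx) (hf : q.proj p.idx h = p.f) : p ≤ q :=
  ⟨h, fun α hp hq => by rw [← q.proj_comp_proj hπ hp h, hf, proj]⟩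

theorem _root_.IsChain.proj_eq {c : Set (PartialLift π d g)} (hc : IsChain (· ≤ ·) c)
    {p q : PartialLift π d g} (hp : p ∈ c) (hq : q ∈ c) {α : Ordinal.{u}} (hαp : α ≤ p.idx)
    (hαq : α ≤ q.idx) : p.proj α hαp = q.proj α hαq := by
  rcases hc.total hp hq with hpq | hqp
  · exact hpq.2 α hαp hαq
  · exact (hqp.2 α hαq hαp).symm

theorem bddAbove_of_isChain (hπ : TransitionsCompose π)
    (hlim : ∀ β ≤ δ, Order.IsSuccLimit β → IsLimitStage π β) {c : Set (PartialLift π d g)}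
    (hc : IsChain (· ≤ ·) c) (hne : c.Nonempty) : BddAbove c := by
  set β := sSup (idx '' c)
  have hbdd : BddAbove (idx '' c) := ⟨δ, by rintro _ ⟨p, -, rfl⟩; exact p.idx_le⟩
  have hβδ : β ≤ δ := csSup_le (hne.image _) (by rintro _ ⟨p, -, rfl⟩; exact p.idx_le)
  by_cases hmem : β ∈ idx '' c
  · obtain ⟨m, hm, hmβ⟩ := hmem
    exact ⟨m, fun p hp => ⟨hmβ ▸ le_csSup hbdd ⟨p, hp, rfl⟩, fun α _ _ => hc.proj_eq hp hm _ _⟩⟩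
  have hβlim : Order.IsSuccLimit β :=
    by_contra fun h => hmem (csSup_mem_of_not_isSuccLimit (hne.image _) hbdd h)
  have hlt : ∀ p ∈ c, p.idx < β := fun p hp =>
    (le_csSup hbdd ⟨p, hp, rfl⟩).lt_of_ne fun h => hmem ⟨p, hp, h⟩
  choose pick hpick_mem hpick_lt using fun α : {a : Ordinal.{u} // a < β} => by
    simpa using exists_lt_of_lt_csSup (hne.image idx) α.2
  have hβ := hlim β hβδ hβlim
  obtain ⟨S, hS⟩ := hβ.exists_linearMap (fun α => (pick α).proj α (hpick_lt α).le)
    fun α₁ α₂ h => by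
      rw [proj_comp_proj hπ]
      exact hc.proj_eq (hpick_mem α₂) (hpick_mem α₁) _ _
  have hS_comp : S ∘ₗ d = π β δ hβδ ∘ₗ g := hβ.linearMap_ext hπ fun α => by
    rw [← LinearMap.comp_assoc, hS, proj_comp hπ, ← LinearMap.comp_assoc, hπ]
  refine ⟨⟨β, hβδ, S, hS_comp⟩, fun p hp => ⟨(hlt p hp).le, fun α hαp _ => ?_⟩⟩
  exact (hc.proj_eq hp (hpick_mem ⟨α, hαp.trans_lt (hlt p hp)⟩) _ _).trans
    (hS ⟨α, hαp.trans_lt (hlt p hp)⟩).symm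

theorem not_isMax {P₂ : Type*} [AddCommGroup P₂] [Module R P₂] [Module.Projective R P₀]
    (hπ : TransitionsCompose π)
    (hsurj : ∀ α < δ, Function.Surjective (π α (α + 1) le_self_add))
    {d₂ : P₂ →ₗ[R] P₁} (hd : d ∘ₗ d₂ = 0) (hg : g ∘ₗ d₂ = 0)
    (hker : ∀ α < δ, ∀ w : P₁ →ₗ[R] LinearMap.ker (π α (α + 1) le_self_add), w ∘ₗ d₂ = 0 →
      ∃ u : P₀ →ₗ[R] LinearMap.ker (π α (α + 1) le_self_add), u ∘ₗ d = w)
    (p : PartialLift π d g) (hp : p.idx < δ) : ¬ IsMax p := by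
  have hsucc : p.idx + 1 ≤ δ := Order.add_one_le_iff.mpr hp
  obtain ⟨f, hf, hf_comp⟩ := exists_lift_of_surjective (hsurj _ hp) hd (hker _ hp) (f := p.f)
    (g := π (p.idx + 1) δ hsucc ∘ₗ g) (by rw [LinearMap.comp_assoc, hg, LinearMap.comp_zero])
    (by rw [← LinearMap.comp_assoc, hπ, p.f_comp])
  intro hmax
  have hle : p ≤ ⟨p.idx + 1, hsucc, f, hf_comp⟩ := le_of_proj_eq hπ le_self_add hf
  exact (lt_add_one p.idx).not_ge (hmax hle).1

end PartialLift

theorem exists_comp_eq {P₂ : Type*} [AddCommGroup P₂] [Module R P₂] [Module.Projective R P₀]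
    (hid : ∀ α, π α α le_rfl = LinearMap.id) (hπ : TransitionsCompose π)
    (hzero : Subsingleton (C 0))
    (hsurj : ∀ α < δ, Function.Surjective (π α (α + 1) le_self_add))
    (hlim : ∀ β ≤ δ, Order.IsSuccLimit β → IsLimitStage π β)
    {d₂ : P₂ →ₗ[R] P₁} (hd : d ∘ₗ d₂ = 0) (hg : g ∘ₗ d₂ = 0)
    (hker : ∀ α < δ, ∀ w : P₁ →ₗ[R] LinearMap.ker (π α (α + 1) le_self_add), w ∘ₗ d₂ = 0 →
      ∃ u : P₀ →ₗ[R] LinearMap.ker (π α (α + 1) le_self_add), u ∘ₗ d = w) :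
    ∃ h : P₀ →ₗ[R] C δ, h ∘ₗ d = g := by
  have : Nonempty (PartialLift π d g) := ⟨⟨0, zero_le, 0, Subsingleton.elim _ _⟩⟩
  obtain ⟨m, hm⟩ := zorn_le_nonempty (α := PartialLift π d g) fun _ hc hne =>
    PartialLift.bddAbove_of_isChain hπ hlim hc hne
  obtain ⟨idx, idx_le, f, f_comp⟩ := m
  obtain rfl : idx = δ :=
    idx_le.eq_of_not_lt fun h => PartialLift.not_isMax hπ hsurj hd hg hker _ h hm
  exact ⟨f, by rw [f_comp, hid, LinearMap.id_comp]⟩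

end DualEklof

/-- dual Eklof lemma.  Let `R` be a commutative ring and `C` an `R`-module
which is a transfinitely iterated extension, in the sense of the projective limit, of
`R`-modules `D_α`: there is an ordinal `δ` and a family of modules `C α` for `α ≤ δ` with
compatible surjective transition maps, `C 0 = 0`, `C δ = C`, the limit condition at limit
ordinals, and `D_α = ker (C (α+1) → C α)`.  If `F` is an `R`-module with
`Ext¹_R(F, D_α) = 0` for all `α < δ`, then `Ext¹_R(F, C δ) = 0`. -/
theorem ext_vanishes_of_transfinite_inverse_extension
    (R : Type) [CommRing R] (δ : Ordinal.{0})
    (C : Ordinal.{0} → Type) [∀ α, AddCommGroup (C α)] [∀ α, Module R (C α)]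
    (π : ∀ α β : Ordinal.{0}, α ≤ β → (C β →ₗ[R] C α))
    (hid : ∀ α, π α α le_rfl = LinearMap.id)
    (hcomp : ∀ (α β γ : Ordinal.{0}) (h₁ : α ≤ β) (h₂ : β ≤ γ),
      (π α β h₁).comp (π β γ h₂) = π α γ (h₁.trans h₂))
    (hzero : Subsingleton (C 0))
    (hsurj : ∀ α : Ordinal.{0}, α < δ →
      Function.Surjective (π α (α + 1) le_self_add))
    (hlim : ∀ β ≤ δ, Order.IsSuccLimit β →
      ∀ g : ∀ α : {a : Ordinal.{0} // a < β}, C α,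
        (∀ (α₁ α₂ : {a : Ordinal.{0} // a < β}) (h : α₁.1 ≤ α₂.1), π α₁ α₂ h (g α₂) = g α₁) →
        ∃! x : C β, ∀ α : {a : Ordinal.{0} // a < β}, π α β α.2.le x = g α)
    (F : Type) [AddCommGroup F] [Module R F]
    (hext : ∀ α : Ordinal.{0}, α < δ →
      Subsingleton (((Ext R (ModuleCat R) 1).obj (Opposite.op (ModuleCat.of R F))).obj
        (ModuleCat.of R (LinearMap.ker (π α (α + 1) le_self_add))))) :
    Subsingleton (((Ext R (ModuleCat R) 1).obj (Opposite.op (ModuleCat.of R F))).obj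
      (ModuleCat.of R (C δ))) := by
  obtain ⟨P⟩ : Nonempty (ProjectiveResolution (ModuleCat.of R F)) := HasProjectiveResolution.out
  have : Module.Projective R (P.complex.X 0) := (IsProjective.iff_projective _).mpr (P.projective 0)
  rw [P.subsingleton_ext_one_iff]
  exact fun g hg => DualEklof.exists_comp_eq hid hcomp hzero hsurj hlim
    (congrArg ModuleCat.Hom.hom (P.complex.d_comp_d 2 1 0)) hg
    fun α hα => (P.subsingleton_ext_one_iff _).1 (hext α hα)
end

section
/- Let R be a Noetherian commutative ring and r ∈ R. Then the r-torsion in any flat R-module F is bounded: there exists m ≥ 1 such that for all x ∈ F and n ≥ 1, r^n x = 0 implies r^m x = 0. -/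
/-!
The annihilators of the powers `rⁿ` form an ascending chain of ideals of `R`, so they stabilise
at some `rᵐ`. By the equational criterion for flatness, an element of `F` killed by `rⁿ` is a
combination of elements of `F` with coefficients in `R` killed by `rⁿ`, hence by `rᵐ`.
-/

open Submodule

namespace Module.Flat

variable {R M : Type*} [CommRing R] [AddCommGroup M] [Module R M] [Flat R M]

theorem exists_eq_sum_smul_of_smul_eq_zero {a : R} {x : M} (hx : a • x = 0) :
    ∃ (k : ℕ) (c : Fin k → R) (y : Fin k → M), x = ∑ j, c j • y j ∧ ∀ j, a * c j = 0 := by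
  obtain ⟨k, c, y, hxy, hc⟩ :=
    isTrivialRelation_of_sum_smul_eq_zero (f := fun _ : Unit ↦ a) (x := fun _ ↦ x)
      (by simpa using hx)
  exact ⟨k, c (), y, hxy (), fun j ↦ by simpa using hc j⟩

theorem torsionBy_le_torsionBy {a b : R} (hab : torsionBy R R a ≤ torsionBy R R b) :
    torsionBy R M a ≤ torsionBy R M b := by
  intro x hx
  obtain ⟨k, c, y, rfl, hc⟩ :=
    exists_eq_sum_smul_of_smul_eq_zero ((mem_torsionBy_iff a x).mp hx)
  have hbc (j : Fin k) : b * c j = 0 := hab (hc j)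
  simp [mem_torsionBy_iff, Finset.smul_sum, smul_smul, hbc]

end Module.Flat

theorem IsNoetherian.exists_forall_torsionBy_pow_le (R M : Type*) [CommRing R] [AddCommGroup M]
    [Module R M] [IsNoetherian R M] (r : R) :
    ∃ m : ℕ, ∀ n, torsionBy R M (r ^ n) ≤ torsionBy R M (r ^ m) := by
  let f := algebraMap R (Module.End R M) r
  have ker_pow (n : ℕ) : LinearMap.ker (f ^ n) = torsionBy R M (r ^ n) := by
    ext x
    simp [f, ← map_pow, mem_torsionBy_iff]
  obtain ⟨m, hm⟩ := f.eventually_iSup_ker_pow_eq.exists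
  refine ⟨m, fun n ↦ ?_⟩
  rw [← ker_pow, ← ker_pow, ← hm]
  exact le_iSup (fun k ↦ LinearMap.ker (f ^ k)) n

/-- Let `R` be a Noetherian commutative ring and `r ∈ R`.  Then the
`r`-torsion in any flat `R`-module `F` is bounded: there exists `m ≥ 1` such that for all
`x ∈ F` and `n ≥ 1`, `rⁿ x = 0` implies `r^m x = 0`. -/
theorem flat_module_bounded_torsion_of_noetherian
    (R : Type) [CommRing R] [IsNoetherianRing R] (r : R)
    (F : Type) [AddCommGroup F] [Module R F] (hF : Module.Flat R F) :
    ∃ m : ℕ, 1 ≤ m ∧ ∀ (x : F) (n : ℕ), 1 ≤ n → r ^ n • x = 0 → r ^ m • x = 0 := by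
  obtain ⟨m, hm⟩ := IsNoetherian.exists_forall_torsionBy_pow_le R R r
  refine ⟨m + 1, le_add_self, fun x n _ hx ↦ ?_⟩
  have hxm : r ^ m • x = 0 := Module.Flat.torsionBy_le_torsionBy (hm n) hx
  rw [pow_succ', mul_smul, hxm, smul_zero]
end

section
/- Let R be a commutative ring and r ∈ R such that the r-torsion in R is bounded (there exists m ≥ 1 with: r^n a = 0 for some n ≥ 1 implies r^m a = 0, for all a ∈ R). Then the r-torsion in any flat R-module is bounded by the same exponent m. -/
/-! By the equational criterion for flatness, the relation `a • x = 0` in a flat module is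
trivial: `x = ∑ⱼ cⱼ • yⱼ` with `a * cⱼ = 0` in `R`. Any `b` killing everything that `a` kills
in `R` therefore kills each `cⱼ`, hence `x`. -/

theorem Module.Flat.smul_eq_zero_of_forall_mul_eq_zero_imp {R M : Type*} [CommRing R]
    [AddCommGroup M] [Module R M] [Module.Flat R M] {a b : R}
    (hab : ∀ c : R, a * c = 0 → b * c = 0) {x : M} (hx : a • x = 0) : b • x = 0 := by
  obtain ⟨k, c, y, hx_eq, hc⟩ := Module.Flat.isTrivialRelation_of_sum_smul_eq_zero
    (f := fun _ : Unit ↦ a) (x := fun _ ↦ x) (by simpa using hx)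
  rw [show x = _ from hx_eq (), Finset.smul_sum]
  refine Finset.sum_eq_zero fun j _ ↦ ?_
  rw [smul_smul, hab _ (by simpa using hc j), zero_smul]

theorem flat_module_bounded_torsion_of_bounded_torsion_general
    (R : Type) [CommRing R] (r : R) (m : ℕ)
    (hR : ∀ (a : R) (n : ℕ), 1 ≤ n → r ^ n * a = 0 → r ^ m * a = 0)
    (F : Type) [AddCommGroup F] [Module R F] (hF : Module.Flat R F) :
    ∀ (x : F) (n : ℕ), 1 ≤ n → r ^ n • x = 0 → r ^ m • x = 0 :=
  fun _ n hn hx ↦ hF.smul_eq_zero_of_forall_mul_eq_zero_imp (fun a ↦ hR a n hn) hx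

/-- Let `R` be a commutative ring and `r ∈ R` such that the `r`-torsion
in `R` is bounded by an exponent `m ≥ 1` (i.e. `rⁿ a = 0` for some `n ≥ 1` implies
`r^m a = 0`).  Then the `r`-torsion in any flat `R`-module is bounded by the same
exponent `m`. -/
theorem flat_module_bounded_torsion_of_bounded_torsion
    (R : Type) [CommRing R] (r : R) (m : ℕ) (hm : 1 ≤ m)
    (hR : ∀ (a : R) (n : ℕ), 1 ≤ n → r ^ n * a = 0 → r ^ m * a = 0)
    (F : Type) [AddCommGroup F] [Module R F] (hF : Module.Flat R F) :
    ∀ (x : F) (n : ℕ), 1 ≤ n → r ^ n • x = 0 → r ^ m • x = 0 :=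
  flat_module_bounded_torsion_of_bounded_torsion_general R r m hR F hF
end

section
/- Let R be a commutative ring, r ∈ R, and C an r-contraadjusted R-module, i.e., Ext^1_R(R[r^{-1}], C) = 0. Then the natural map C → lim_n C/r^n C to the r-adic completion is surjective. -/
/-!
`R[r⁻¹]` has the projective resolution `0 → R^(ℕ) → R^(ℕ) → R[r⁻¹] → 0` with
`eₙ ↦ eₙ - r eₙ₊₁` and `eₙ ↦ r⁻ⁿ` (the telescope). Computing `Ext¹` with it, the vanishing of
`Ext¹_R(R[r⁻¹], C)` says that every system `xₙ - r xₙ₊₁ = bₙ` has a solution in `C`.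
If `cₙ₊₁ - cₙ = rⁿ bₙ`, then `c₀ + x₀` is a limit of the sequence, since `c₀ + x₀ - cₙ = rⁿ xₙ`.
-/

open CategoryTheory Limits ZeroObject IsLocalization.Away Finsupp

universe u

noncomputable section

namespace CategoryTheory.ShortComplex

variable {C : Type*} [Category* C] [Abelian C] (S : ShortComplex C)

def presentationX : ℕ → C
  | 0 => S.X₂
  | 1 => S.X₁
  | _ + 2 => 0

def presentationD : ∀ n : ℕ, S.presentationX (n + 1) ⟶ S.presentationX n
  | 0 => S.f
  | _ + 1 => 0

def presentationComplex : ChainComplex C ℕ :=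
  ChainComplex.of S.presentationX S.presentationD fun n => by
    rw [show S.presentationD (n + 1) = 0 from rfl, zero_comp]

lemma presentationComplex_d_one_zero : S.presentationComplex.d 1 0 = S.f := by
  unfold presentationComplex
  exact ChainComplex.of_d S.presentationX S.presentationD 0

lemma isZero_presentationComplex_X (n : ℕ) : IsZero (S.presentationComplex.X (n + 2)) :=
  isZero_zero C

def presentationπ : S.presentationComplex ⟶ (ChainComplex.single₀ C).obj S.X₃ :=
  (ChainComplex.toSingle₀Equiv _ _).symm ⟨S.g, by rw [presentationComplex_d_one_zero]; exact S.zero⟩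

lemma presentationπ_f_zero : S.presentationπ.f 0 = S.g :=
  ChainComplex.toSingle₀Equiv_symm_apply_f_zero _ _

variable {S}

lemma ShortExact.presentationComplex_exactAt_succ (hS : S.ShortExact) (n : ℕ) :
    S.presentationComplex.ExactAt (n + 1) := by
  rw [HomologicalComplex.exactAt_iff' _ (n + 2) (n + 1) n (by simp) (by simp)]
  cases n with
  | zero =>
    refine (ShortComplex.exact_iff_mono _ ?_).2 ?_
    · exact (S.isZero_presentationComplex_X 0).eq_of_src _ _
    · show Mono (S.presentationComplex.d 1 0)
      rw [presentationComplex_d_one_zero]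
      exact hS.mono_f
  | succ n => exact ShortComplex.exact_of_isZero_X₂ _ (S.isZero_presentationComplex_X n)

def ShortExact.projectiveResolution (hS : S.ShortExact) [Projective S.X₁] [Projective S.X₂] :
    ProjectiveResolution S.X₃ where
  complex := S.presentationComplex
  projective
    | 0 => inferInstanceAs (Projective S.X₂)
    | 1 => inferInstanceAs (Projective S.X₁)
    | n + 2 => (S.isZero_presentationComplex_X n).projective
  π := S.presentationπ
  quasiIso := ⟨fun n => by
    cases n with
    | zero =>
      rw [ChainComplex.quasiIsoAt₀_iff, ShortComplex.quasiIso_iff_of_zeros']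
      · refine (ShortComplex.exact_and_epi_g_iff_of_iso ?_).2 ⟨hS.exact, hS.epi_g⟩
        refine ShortComplex.isoMk (Iso.refl _) (Iso.refl _) (Iso.refl _) ?_ ?_
        · exact (Category.id_comp _).trans
            ((presentationComplex_d_one_zero S).symm.trans (Category.comp_id _).symm)
        · exact (Category.id_comp _).trans
            ((presentationπ_f_zero S).symm.trans (Category.comp_id _).symm)
      all_goals rfl
    | succ n =>
      rw [quasiIsoAt_iff_exactAt']
      · exact hS.presentationComplex_exactAt_succ n
      · apply ChainComplex.exactAt_succ_single_obj⟩

lemma ShortExact.exists_comp_eq_of_subsingleton_ext_one {R : Type*} [Ring R] [Linear R C]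
    [EnoughProjectives C] (hS : S.ShortExact) [Projective S.X₁] [Projective S.X₂] {Y : C}
    (hExt : Subsingleton (((Ext R C 1).obj (Opposite.op S.X₃)).obj Y)) (g : S.X₁ ⟶ Y) :
    ∃ h : S.X₂ ⟶ Y, S.f ≫ h = g := by
  set K := hS.projectiveResolution.complex.linearYonedaObj R Y
  have hK : K.ExactAt 1 := by
    rw [HomologicalComplex.exactAt_iff_isZero_homology]
    exact ModuleCat.isZero_of_subsingleton _ |>.of_iso (hS.projectiveResolution.isoExt 1 Y).symm
  rw [HomologicalComplex.exactAt_iff' K 0 1 2 (by simp) (by simp),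
    ShortComplex.moduleCat_exact_iff] at hK
  obtain ⟨h, hh⟩ := hK g ((S.isZero_presentationComplex_X 0).eq_of_src _ _)
  refine ⟨h, ?_⟩
  rw [← presentationComplex_d_one_zero]
  exact hh

end CategoryTheory.ShortComplex

namespace Telescope

variable {R : Type*} [CommRing R] (r : R)

def d : (ℕ →₀ R) →ₗ[R] ℕ →₀ R :=
  LinearMap.id - r • lmapDomain R R Nat.succ

lemma d_single (n : ℕ) (a : R) : d r (single n a) = single n a - single (n + 1) (r * a) := by
  simp [d, mapDomain_single, smul_single]

lemma d_apply_zero (g : ℕ →₀ R) : d r g 0 = g 0 := by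
  have h0 : (0 : ℕ) ∉ Set.range Nat.succ := by simp
  simp [d, mapDomain_of_notMem_range _ _ h0]

lemma d_apply_succ (g : ℕ →₀ R) (m : ℕ) : d r g (m + 1) = g (m + 1) - r * g m := by
  simp [d, mapDomain_apply Nat.succ_injective]

lemma d_injective : Function.Injective (d r) := by
  refine (injective_iff_map_eq_zero _).2 fun g hg => ?_
  ext m
  induction m with
  | zero => simpa [hg] using (d_apply_zero r g).symm
  | succ m ih => simpa [hg, ih] using (d_apply_succ r g m).symm

lemma single_sub_single_mem_range_d (n k : ℕ) (a : R) :
    single n a - single (n + k) (r ^ k * a) ∈ LinearMap.range (d r) := by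
  induction k with
  | zero => simp
  | succ k ih =>
    have := add_mem ih (LinearMap.mem_range_self (d r) (single (n + k) (r ^ k * a)))
    rwa [d_single, sub_add_sub_cancel, ← mul_assoc, ← pow_succ', add_assoc] at this

lemma exists_sub_single_mem_range_d (g : ℕ →₀ R) :
    ∃ N a, g - single N a ∈ LinearMap.range (d r) := by
  induction g using Finsupp.induction_linear with
  | zero => exact ⟨0, 0, by simp⟩
  | single n a => exact ⟨n, a, by simp⟩
  | add f g hf hg =>
    obtain ⟨M, a, ha⟩ := hf
    obtain ⟨N, b, hb⟩ := hg
    refine ⟨M + N, r ^ N * a + r ^ M * b, ?_⟩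
    have hM := single_sub_single_mem_range_d r M N a
    have hN := single_sub_single_mem_range_d r N M b
    rw [add_comm N M] at hN
    convert add_mem (add_mem ha hb) (add_mem hM hN) using 1
    rw [single_add]
    abel

variable (S : Type*) [CommRing S] [Algebra R S] [IsLocalization.Away r S]

def π : (ℕ →₀ R) →ₗ[R] S :=
  linearCombination R fun n => invSelf (S := S) r ^ n

lemma π_single (n : ℕ) (a : R) : π r S (single n a) = a • invSelf r ^ n :=
  linearCombination_single _ _ _

lemma pow_smul_π_single (n : ℕ) (a : R) : r ^ n • π r S (single n a) = algebraMap R S a := by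
  rw [π_single, smul_comm, Algebra.smul_def (r ^ n), map_pow, ← mul_pow, mul_invSelf, one_pow,
    Algebra.algebraMap_eq_smul_one]

lemma π_comp_d : π r S ∘ₗ d r = 0 := by
  ext n
  simp only [LinearMap.comp_apply, lsingle_apply, d_single, map_sub, π_single,
    LinearMap.zero_apply]
  rw [mul_one, one_smul, pow_succ', Algebra.smul_def, ← mul_assoc, mul_invSelf, one_mul, sub_self]

lemma π_surjective : Function.Surjective (π r S) := by
  intro z
  obtain ⟨n, a, h⟩ := IsLocalization.Away.surj r z
  refine ⟨single n a, ?_⟩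
  rw [π_single, Algebra.smul_def, ← h, mul_assoc, ← mul_pow, mul_invSelf, one_pow, mul_one]

lemma exact_d_π : Function.Exact (d r) (π r S) := by
  refine fun g => ⟨fun hg => ?_, fun ⟨f, hf⟩ => hf ▸ LinearMap.congr_fun (π_comp_d r S) f⟩
  obtain ⟨N, a, hN⟩ := exists_sub_single_mem_range_d r g
  have hπ : π r S (single N a) = 0 := by
    obtain ⟨f, hf⟩ := hN
    have := LinearMap.congr_fun (π_comp_d r S) f
    rw [LinearMap.comp_apply, hf, map_sub, hg] at this
    simpa using this
  obtain ⟨k, hk⟩ := IsLocalization.Away.exists_of_eq (S := S) (x := r) (a := a) (b := 0)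
    (by rw [← pow_smul_π_single r S N a, hπ, smul_zero, map_zero])
  have hsingle := single_sub_single_mem_range_d r N k a
  rw [hk, mul_zero, single_zero, sub_zero] at hsingle
  simpa using add_mem hN hsingle

section ModuleCat

variable {R : Type u} [CommRing R] (r : R) (S : Type u) [CommRing S] [Algebra R S]
  [IsLocalization.Away r S]

def shortComplex : ShortComplex (ModuleCat.{u} R) :=
  ShortComplex.moduleCatMk (d r) (π r S) (π_comp_d r S)

lemma shortComplex_shortExact : (shortComplex r S).ShortExact :=
  ModuleCat.shortComplex_shortExact _ (exact_d_π r S) (d_injective r) (π_surjective r S)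

instance : Projective (shortComplex r S).X₁ := ModuleCat.projective_of_free Finsupp.basisSingleOne

instance : Projective (shortComplex r S).X₂ := ModuleCat.projective_of_free Finsupp.basisSingleOne

lemma surjective_sub_smul_succ_of_subsingleton_ext {M : Type u} [AddCommGroup M] [Module R M]
    (hExt : Subsingleton (((Ext R (ModuleCat R) 1).obj
      (Opposite.op (ModuleCat.of R S))).obj (ModuleCat.of R M))) :
    Function.Surjective fun x : ℕ → M => fun n => x n - r • x (n + 1) := by
  intro b
  obtain ⟨h, hh⟩ := (shortComplex_shortExact r S).exists_comp_eq_of_subsingleton_ext_one hExt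
    (ModuleCat.ofHom (linearCombination R b))
  let φ : (ℕ →₀ R) →ₗ[R] M := h.hom
  have hφ : φ ∘ₗ d r = linearCombination R b := congrArg ModuleCat.Hom.hom hh
  refine ⟨fun n => φ (single n 1), funext fun n => ?_⟩
  have key := LinearMap.congr_fun hφ (single n 1)
  rwa [LinearMap.comp_apply, d_single, mul_one, ← smul_single_one (n + 1) r, map_sub, map_smul,
    linearCombination_single, one_smul] at key

end ModuleCat

end Telescope

section

variable {R : Type*} [CommRing R] {M : Type*} [AddCommGroup M] [Module R M]

lemma Submodule.mem_ideal_span_singleton_smul_top_iff (s : R) (m : M) :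
    m ∈ (Ideal.span {s} • ⊤ : Submodule R M) ↔ ∃ y, s • y = m := by
  rw [Submodule.ideal_span_singleton_smul, Submodule.mem_smul_pointwise_iff_exists]
  simp

lemma exists_sub_mem_span_pow_smul_top_of_surjective_sub_smul_succ {r : R}
    (hr : Function.Surjective fun x : ℕ → M => fun n => x n - r • x (n + 1)) (c : ℕ → M)
    (hc : ∀ n, c (n + 1) - c n ∈ (Ideal.span {r ^ n} • ⊤ : Submodule R M)) :
    ∃ x, ∀ n, x - c n ∈ (Ideal.span {r ^ n} • ⊤ : Submodule R M) := by
  simp only [Submodule.mem_ideal_span_singleton_smul_top_iff] at hc ⊢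
  choose b hb using hc
  obtain ⟨x, hx⟩ := hr b
  refine ⟨c 0 + x 0, fun n => ⟨x n, ?_⟩⟩
  induction n with
  | zero => simp
  | succ n ih =>
    calc r ^ (n + 1) • x (n + 1) = r ^ n • (x n - b n) := by
          rw [← congr_fun hx n, sub_sub_cancel, pow_succ, mul_smul]
      _ = c 0 + x 0 - c (n + 1) := by
          rw [smul_sub, ih, hb n]
          abel

end

end

/-- Let `R` be a commutative ring, `r ∈ R`, and `C` an `r`-contraadjusted
`R`-module, i.e. `Ext¹_R(R[r⁻¹], C) = 0`.  Then the natural map `C → lim_n C/rⁿC` to the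
`r`-adic completion is surjective: every compatible sequence of cosets is the image of an
element of `C`. -/
theorem contraadjusted_is_complete
    (R : Type) [CommRing R] (r : R)
    (C : Type) [AddCommGroup C] [Module R C]
    (hca : Subsingleton (((Ext R (ModuleCat R) 1).obj
      (Opposite.op (ModuleCat.of R (Localization.Away r)))).obj (ModuleCat.of R C))) :
    ∀ c : ℕ → C,
      (∀ n : ℕ, c (n + 1) - c n ∈ (Ideal.span {r ^ n} • ⊤ : Submodule R C)) →
      ∃ x : C, ∀ n : ℕ, x - c n ∈ (Ideal.span {r ^ n} • ⊤ : Submodule R C) :=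
  exists_sub_mem_span_pow_smul_top_of_surjective_sub_smul_succ
    (Telescope.surjective_sub_smul_succ_of_subsingleton_ext r (Localization.Away r) hca)
end

section
/- Let R be a commutative ring and C a contraadjusted R-module (Ext^1_R(R[t^{-1}], C) = 0 for every t ∈ R). Then for every r ∈ R, the R[r^{-1}]-module Hom_R(R[r^{-1}], C) is a contraadjusted R[r^{-1}]-module. -/
open CategoryTheory

/-- The module structure over a commutative `R`-algebra `S` on `Hom_R(S, C)`, acting through
the first (domain) argument: `(s • f) x = f (s * x)`. -/
noncomputable instance homDomainModule (R : Type) [CommRing R] (S : Type) [CommRing S]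
    [Algebra R S] (C : Type) [AddCommGroup C] [Module R C] :
    Module S (S →ₗ[R] C) where
  smul s f := f ∘ₗ Algebra.lmul R S s
  one_smul f := by ext x; show f (1 * x) = f x; rw [one_mul]
  mul_smul s t f := by
    ext x; show f (s * t * x) = f (t * (s * x)); congr 1; ring
  smul_zero s := by ext x; show (0 : S →ₗ[R] C) (s * x) = 0; simp
  smul_add s f g := by
    ext x; show (f + g) (s * x) = f (s * x) + g (s * x); simp
  add_smul s t f := by
    ext x; show f ((s + t) * x) = f (s * x) + f (t * x); rw [add_mul, map_add]
  zero_smul f := by ext x; show f (0 * x) = 0; rw [zero_mul, map_zero]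

/-! `A[t⁻¹] = A[X]/(tX - 1)` gives the free resolution `0 → A[X] → A[X] → A[t⁻¹] → 0`, the first
map being multiplication by `tX - 1`. On the basis `Xⁿ` this says that `Ext¹_A(A[t⁻¹], D) = 0`
iff every sequence `d` in `D` has the form `d n = t • c (n + 1) - c n`.

An `R`-linear map `R[r⁻¹] → C` is a sequence `u` in `C` with `r • u (m + 1) = u m`, its values
at the powers of `r⁻¹`. Up to a unit of `R[r⁻¹]`, `t' = a` lies in `R`, and the telescope
equation for `a` in `Hom_R(R[r⁻¹], C)` becomes a doubly indexed system in `C`. As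
`R[r⁻¹][a⁻¹] = R[(ar)⁻¹]`, it is solved by back-substitution from a solution of the telescope
equation for `a * r` in `C`, placed on the diagonal. -/

open Polynomial

section ShortExact

variable {A : Type} [CommRing A] {P₁ P₀ Z : Type} [AddCommGroup P₁] [Module A P₁]
  [AddCommGroup P₀] [Module A P₀] [AddCommGroup Z] [Module A Z]

theorem Function.Exact.exists_comp_eq_of_comp_eq_zero {f : P₁ →ₗ[A] P₀} {g : P₀ →ₗ[A] Z}
    {D : Type} [AddCommGroup D] [Module A D] (h : Function.Exact f g) (hg : Function.Surjective g)
    (φ : P₀ →ₗ[A] D) (hφ : φ ∘ₗ f = 0) : ∃ ψ : Z →ₗ[A] D, ψ ∘ₗ g = φ := by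
  refine ⟨(LinearMap.range f).liftQ φ ?_ ∘ₗ (h.linearEquivOfSurjective hg).symm.toLinearMap, ?_⟩
  · rintro _ ⟨x, rfl⟩
    exact LinearMap.congr_fun hφ x
  · ext x
    simp

variable (A P₁ P₀) in
def twoTermComplexX : ℕ → ModuleCat A
  | 0 => .of A P₀
  | 1 => .of A P₁
  | _ + 2 => .of A PUnit

def twoTermComplexD (f : P₁ →ₗ[A] P₀) :
    ∀ n, twoTermComplexX A P₁ P₀ (n + 1) ⟶ twoTermComplexX A P₁ P₀ n
  | 0 => ModuleCat.ofHom f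
  | _ + 1 => 0

def twoTermComplex (f : P₁ →ₗ[A] P₀) : ChainComplex (ModuleCat A) ℕ :=
  ChainComplex.of _ (twoTermComplexD f) fun
    | 0 => Limits.zero_comp
    | _ + 1 => Limits.zero_comp

lemma twoTermComplex_d_one_zero (f : P₁ →ₗ[A] P₀) :
    (twoTermComplex f).d 1 0 = ModuleCat.ofHom f :=
  ChainComplex.of_d (twoTermComplexX A P₁ P₀) (twoTermComplexD f) 0

noncomputable def twoTermProjectiveResolution [Module.Projective A P₁] [Module.Projective A P₀]
    {f : P₁ →ₗ[A] P₀} {g : P₀ →ₗ[A] Z} (hf : Function.Injective f) (h : Function.Exact f g)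
    (hg : Function.Surjective g) : ProjectiveResolution (ModuleCat.of A Z) where
  complex := twoTermComplex f
  projective n := by
    match n with
    | 0 => exact inferInstanceAs (Projective (ModuleCat.of A P₀))
    | 1 => exact inferInstanceAs (Projective (ModuleCat.of A P₁))
    | _ + 2 => exact (ModuleCat.isZero_of_subsingleton (.of A PUnit.{1})).projective
  π := (ChainComplex.toSingle₀Equiv _ _).symm ⟨ModuleCat.ofHom g, by
    rw [twoTermComplex_d_one_zero]
    ext x
    exact h.apply_apply_eq_zero x⟩
  quasiIso := ⟨fun n => by
    cases n with
    | zero =>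
      rw [ChainComplex.quasiIsoAt₀_iff, ShortComplex.quasiIso_iff_of_zeros' _ rfl rfl rfl]
      refine ⟨?_, ?_⟩
      · rw [ShortComplex.moduleCat_exact_iff]
        intro x hx
        obtain ⟨y, rfl⟩ := (h x).mp hx
        exact ⟨y, rfl⟩
      · exact (ModuleCat.epi_iff_surjective _).mpr hg
    | succ n =>
      rw [quasiIsoAt_iff_exactAt' _ _ (ChainComplex.exactAt_succ_single_obj _ _),
        HomologicalComplex.exactAt_iff' _ (n + 2) (n + 1) n (by simp) (by simp)]
      cases n with
      | zero =>
        rw [ShortComplex.moduleCat_exact_iff]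
        intro x (hx : f x = 0)
        exact ⟨0, (map_zero _).trans (hf (hx.trans (map_zero f).symm)).symm⟩
      | succ n =>
        exact ShortComplex.exact_of_isZero_X₂ _ (ModuleCat.isZero_of_subsingleton (.of A PUnit))⟩

theorem subsingleton_ext_one_iff_of_shortExact [Module.Projective A P₁] [Module.Projective A P₀]
    {f : P₁ →ₗ[A] P₀} {g : P₀ →ₗ[A] Z} (hf : Function.Injective f) (h : Function.Exact f g)
    (hg : Function.Surjective g) (D : Type) [AddCommGroup D] [Module A D] :
    Subsingleton (((Ext A (ModuleCat A) 1).obj (.op (.of A Z))).obj (.of A D)) ↔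
      ∀ φ : P₁ →ₗ[A] D, ∃ ψ : P₀ →ₗ[A] D, ψ ∘ₗ f = φ := by
  set P := twoTermProjectiveResolution hf h hg
  rw [((forget _).mapIso (P.isoExt 1 (.of A D))).toEquiv.subsingleton_congr,
    ← ModuleCat.isZero_iff_subsingleton, ← HomologicalComplex.exactAt_iff_isZero_homology,
    HomologicalComplex.exactAt_iff' _ 0 1 2 (by simp) (by simp),
    ShortComplex.moduleCat_exact_iff]
  change (∀ φ : ModuleCat.of A P₁ ⟶ .of A D, _ → ∃ ψ : ModuleCat.of A P₀ ⟶ .of A D,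
    ModuleCat.ofHom f ≫ ψ = φ) ↔ _
  constructor
  · intro H φ
    obtain ⟨ψ, hψ⟩ :=
      H (ModuleCat.ofHom φ) ((ModuleCat.isZero_of_subsingleton (.of A PUnit)).eq_of_src _ _)
    exact ⟨ψ.hom, congrArg ModuleCat.Hom.hom hψ⟩
  · intro H φ _
    obtain ⟨ψ, hψ⟩ := H φ.hom
    exact ⟨ModuleCat.ofHom ψ, ModuleCat.hom_ext hψ⟩

end ShortExact

section Telescope

variable {A : Type} [CommRing A] {M : Type*} [AddCommGroup M] [Module A M]

def TelescopeSurjective (t : A) (D : Type*) [AddCommGroup D] [Module A D] : Prop :=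
  ∀ d : ℕ → D, ∃ c : ℕ → D, ∀ n, t • c (n + 1) - c n = d n

theorem TelescopeSurjective.of_mul_unit {t : A} (v : Aˣ) (h : TelescopeSurjective (t * v) M) :
    TelescopeSurjective t M := by
  intro d
  obtain ⟨b, hb⟩ := h fun n => ((v⁻¹ : Aˣ) : A) ^ n • d n
  refine ⟨fun n => (v : A) ^ n • b n, fun n => ?_⟩
  calc t • (v : A) ^ (n + 1) • b (n + 1) - (v : A) ^ n • b n
      = (v : A) ^ n • ((t * v) • b (n + 1) - b n) := by
        rw [smul_sub, smul_smul, smul_smul, pow_succ, mul_left_comm]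
    _ = d n := by rw [hb, smul_smul, ← mul_pow, Units.mul_inv, one_pow, one_smul]

/-- Given diagonal values `W n` of a solution `c` of `p • c (n + 1) m - c n m = δ n m`, this is
`c n (n + i)`, obtained by back-substitution. -/
def telescopeBackSubst (p : A) (W : ℕ → M) (δ : ℕ → ℕ → M) (n i : ℕ) : M :=
  p ^ i • W (n + i) - ∑ j ∈ Finset.range i, p ^ j • δ (n + j) (n + i)

theorem smul_telescopeBackSubst_sub (p : A) (W : ℕ → M) (δ : ℕ → ℕ → M) (n i : ℕ) :
    p • telescopeBackSubst p W δ (n + 1) i - telescopeBackSubst p W δ n (i + 1) =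
      δ n (n + i + 1) := by
  simp only [telescopeBackSubst, Finset.sum_range_succ', smul_sub, Finset.smul_sum, smul_smul,
    ← pow_succ']
  simp only [add_assoc, add_comm 1, add_zero, pow_zero, one_smul]
  abel

theorem smul_telescopeBackSubst_succ {p r : A} {W : ℕ → M} {δ : ℕ → ℕ → M}
    (hW : ∀ k, (p * r) • W (k + 1) - W k = δ k k) (hδ : ∀ n m, r • δ n (m + 1) = δ n m)
    (n i : ℕ) : r • telescopeBackSubst p W δ n (i + 1) = telescopeBackSubst p W δ n i := by
  have hsum : r • ∑ j ∈ Finset.range (i + 1), p ^ j • δ (n + j) (n + i + 1) =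
      ∑ j ∈ Finset.range (i + 1), p ^ j • δ (n + j) (n + i) := by
    rw [Finset.smul_sum]
    exact Finset.sum_congr rfl fun j _ => by rw [smul_comm, hδ]
  have hW' : (p * r) • W (n + i + 1) = W (n + i) + δ (n + i) (n + i) := by
    rw [← hW]; abel
  simp only [telescopeBackSubst, ← add_assoc]
  rw [smul_sub, hsum, Finset.sum_range_succ, smul_smul,
    show r * p ^ (i + 1) = p ^ i * (p * r) by ring, mul_smul, hW']
  module

theorem TelescopeSurjective.exists_compatible_solution {p r : A}
    (hM : TelescopeSurjective (p * r) M) (δ : ℕ → ℕ → M) (hδ : ∀ n m, r • δ n (m + 1) = δ n m) :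
    ∃ c : ℕ → ℕ → M,
      (∀ n m, r • c n (m + 1) = c n m) ∧ ∀ n m, p • c (n + 1) m - c n m = δ n m := by
  obtain ⟨W, hW⟩ := hM fun k => δ k k
  have hδ_pow (n m k : ℕ) : r ^ k • δ n (m + k) = δ n m := by
    induction k with
    | zero => rw [pow_zero, one_smul, add_zero]
    | succ k ih => rw [pow_succ, mul_smul, ← add_assoc, hδ, ih]
  have hz := smul_telescopeBackSubst_succ hW hδ
  refine ⟨fun n m => r ^ (n + 1) • telescopeBackSubst p W δ n (m + 1), fun n m => ?_,
    fun n m => ?_⟩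
  · rw [smul_comm, hz]
  · calc p • r ^ (n + 2) • telescopeBackSubst p W δ (n + 1) (m + 1) -
          r ^ (n + 1) • telescopeBackSubst p W δ n (m + 1)
        = r ^ (n + 2) • (p • telescopeBackSubst p W δ (n + 1) (m + 1) -
            telescopeBackSubst p W δ n (m + 2)) := by
          rw [← hz n (m + 1)]
          module
      _ = δ n m := by
          rw [smul_telescopeBackSubst_sub, show n + (m + 1) + 1 = m + (n + 2) by omega, hδ_pow]

end Telescope

section LocalizationAwayPresentation

variable {A : Type} [CommRing A] (t : A)

theorem mulLeft_C_mul_X_sub_one_injective :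
    Function.Injective (LinearMap.mulLeft A (C t * X - 1)) := by
  have hq : C t * X - 1 ∈ nonZeroDivisors A[X] :=
    Polynomial.mem_nonZeroDivisors_iff.mpr fun a ha => by simpa using congrArg (coeff · 0) ha
  refine (injective_iff_map_eq_zero _).mpr fun x hx => ?_
  rw [LinearMap.mulLeft_apply, mul_comm] at hx
  exact (mul_right_mem_nonZeroDivisors_eq_zero_iff hq).mp hx

theorem Localization.awayEquivAdjoin_symm_mk (x : A[X]) :
    (Localization.awayEquivAdjoin t).symm (AdjoinRoot.mk _ x) =
      aeval (IsLocalization.Away.invSelf (S := Localization.Away t) t) x :=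
  rfl

theorem aeval_invSelf_surjective :
    Function.Surjective
      (aeval (R := A) (IsLocalization.Away.invSelf (S := Localization.Away t) t)).toLinearMap := by
  intro z
  obtain ⟨x, hx⟩ := AdjoinRoot.mk_surjective (Localization.awayEquivAdjoin t z)
  refine ⟨x, ?_⟩
  rw [AlgHom.toLinearMap_apply, ← Localization.awayEquivAdjoin_symm_mk, hx,
    AlgEquiv.symm_apply_apply]

theorem exact_mulLeft_aeval_invSelf :
    Function.Exact (LinearMap.mulLeft A (C t * X - 1))
      (aeval (R := A) (IsLocalization.Away.invSelf (S := Localization.Away t) t)).toLinearMap := by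
  intro x
  rw [AlgHom.toLinearMap_apply, ← Localization.awayEquivAdjoin_symm_mk,
    map_eq_zero_iff _ (AlgEquiv.injective _), AdjoinRoot.mk_eq_zero, dvd_def]
  simp [eq_comm]

section LinearMapsFromPolynomials

variable {D : Type*} [AddCommGroup D] [Module A D]

theorem Polynomial.linearMap_ext_X_pow {f g : A[X] →ₗ[A] D} (h : ∀ n, f (X ^ n) = g (X ^ n)) :
    f = g :=
  (basisMonomials A).ext fun n => by
    simpa [coe_basisMonomials, monomial_one_right_eq_X_pow] using h n

theorem Polynomial.constr_basisMonomials_X_pow (c : ℕ → D) (n : ℕ) :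
    (basisMonomials A).constr A c (X ^ n) = c n := by
  simpa [coe_basisMonomials, monomial_one_right_eq_X_pow] using
    (basisMonomials A).constr_basis A c n

variable {t} in
theorem comp_mulLeft_apply_X_pow (φ : A[X] →ₗ[A] D) (n : ℕ) :
    (φ ∘ₗ LinearMap.mulLeft A (C t * X - 1)) (X ^ n) = t • φ (X ^ (n + 1)) - φ (X ^ n) := by
  simp [sub_mul, ← pow_succ', C_mul']

variable (D) in
theorem forall_exists_comp_mulLeft_eq_iff :
    (∀ φ : A[X] →ₗ[A] D, ∃ ψ : A[X] →ₗ[A] D, ψ ∘ₗ LinearMap.mulLeft A (C t * X - 1) = φ) ↔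
      TelescopeSurjective t D := by
  constructor
  · intro H d
    obtain ⟨ψ, hψ⟩ := H ((basisMonomials A).constr A d)
    refine ⟨fun n => ψ (X ^ n), fun n => ?_⟩
    rw [← comp_mulLeft_apply_X_pow, hψ, constr_basisMonomials_X_pow]
  · intro H φ
    obtain ⟨c, hc⟩ := H fun n => φ (X ^ n)
    refine ⟨(basisMonomials A).constr A c, linearMap_ext_X_pow fun n => ?_⟩
    rw [comp_mulLeft_apply_X_pow, constr_basisMonomials_X_pow, constr_basisMonomials_X_pow, hc]

end LinearMapsFromPolynomials

theorem subsingleton_ext_one_localizationAway_iff (D : Type) [AddCommGroup D] [Module A D] :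
    Subsingleton
        (((Ext A (ModuleCat A) 1).obj (.op (.of A (Localization.Away t)))).obj (.of A D)) ↔
      TelescopeSurjective t D :=
  (subsingleton_ext_one_iff_of_shortExact (mulLeft_C_mul_X_sub_one_injective t)
    (exact_mulLeft_aeval_invSelf t) (aeval_invSelf_surjective t) D).trans
    (forall_exists_comp_mulLeft_eq_iff t D)

end LocalizationAwayPresentation

section LocalizationAwayHom

variable {R : Type} [CommRing R] {M : Type} [AddCommGroup M] [Module R M] (r : R)

local notation "r⁻¹" => IsLocalization.Away.invSelf (S := Localization.Away r) r

theorem linearMap_ext_invSelf_pow {f g : Localization.Away r →ₗ[R] M}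
    (h : ∀ m, f (r⁻¹ ^ m) = g (r⁻¹ ^ m)) : f = g :=
  (LinearMap.cancel_right (aeval_invSelf_surjective r)).mp
    (linearMap_ext_X_pow fun m => by simpa using h m)

theorem exists_linearMap_invSelf_pow_eq (u : ℕ → M) (hu : ∀ m, r • u (m + 1) = u m) :
    ∃ f : Localization.Away r →ₗ[R] M, ∀ m, f (r⁻¹ ^ m) = u m := by
  set φ := (basisMonomials R).constr R u
  have hφ : φ ∘ₗ LinearMap.mulLeft R (C r * X - 1) = 0 := linearMap_ext_X_pow fun m => by
    rw [comp_mulLeft_apply_X_pow, constr_basisMonomials_X_pow, constr_basisMonomials_X_pow, hu,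
      sub_self, LinearMap.zero_apply]
  obtain ⟨f, hf⟩ := (exact_mulLeft_aeval_invSelf r).exists_comp_eq_of_comp_eq_zero
    (aeval_invSelf_surjective r) φ hφ
  refine ⟨f, fun m => ?_⟩
  have := LinearMap.congr_fun hf (X ^ m)
  rwa [LinearMap.comp_apply, AlgHom.toLinearMap_apply, map_pow, aeval_X,
    constr_basisMonomials_X_pow] at this

theorem smul_invSelf_pow_succ (m : ℕ) : r • r⁻¹ ^ (m + 1) = r⁻¹ ^ m := by
  rw [Algebra.smul_def, pow_succ', ← mul_assoc, IsLocalization.Away.mul_invSelf, one_mul]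

theorem telescopeSurjective_localizationAway_hom {p : R} (hM : TelescopeSurjective (p * r) M) :
    TelescopeSurjective (algebraMap R (Localization.Away r) p) (Localization.Away r →ₗ[R] M) := by
  intro d
  obtain ⟨c, hc_compat, hc⟩ := hM.exists_compatible_solution (fun n m => d n (r⁻¹ ^ m))
    fun n m => by rw [← map_smul, smul_invSelf_pow_succ]
  choose f hf using fun n => exists_linearMap_invSelf_pow_eq r (c n) (hc_compat n)
  refine ⟨f, fun n => linearMap_ext_invSelf_pow r fun m => ?_⟩
  change f (n + 1) (algebraMap R _ p * r⁻¹ ^ m) - f n (r⁻¹ ^ m) = d n (r⁻¹ ^ m)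
  rw [← Algebra.smul_def, map_smul, hf, hf, hc]

end LocalizationAwayHom

/-- Let `R` be a commutative ring and `C` a contraadjusted `R`-module
(`Ext¹_R(R[t⁻¹], C) = 0` for every `t ∈ R`).  Then for every `r ∈ R`, the
`R[r⁻¹]`-module `Hom_R(R[r⁻¹], C)` is a contraadjusted `R[r⁻¹]`-module. -/
theorem hom_localization_contraadjusted
    (R : Type) [CommRing R]
    (C : Type) [AddCommGroup C] [Module R C]
    (hC : ∀ t : R, Subsingleton (((Ext R (ModuleCat R) 1).obj
      (Opposite.op (ModuleCat.of R (Localization.Away t)))).obj (ModuleCat.of R C)))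
    (r : R) :
    ∀ t' : Localization.Away r,
      Subsingleton (((Ext (Localization.Away r) (ModuleCat (Localization.Away r)) 1).obj
        (Opposite.op (ModuleCat.of (Localization.Away r) (Localization.Away t')))).obj
        (ModuleCat.of (Localization.Away r) (Localization.Away r →ₗ[R] C))) := by
  intro t'
  rw [subsingleton_ext_one_localizationAway_iff]
  obtain ⟨n, a, ha⟩ := IsLocalization.Away.surj r t'
  refine TelescopeSurjective.of_mul_unit (IsLocalization.Away.algebraMap_pow_isUnit r n).unit ?_
  rw [IsUnit.unit_spec, ha]
  exact telescopeSurjective_localizationAway_hom r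
    ((subsingleton_ext_one_localizationAway_iff (a * r) C).mp (hC (a * r)))
end

section
/- Let R → S be a homomorphism of commutative rings inducing a surjective map Spec S → Spec R, and let R → R' be any homomorphism of commutative rings. Then the induced map Spec(R' ⊗_R S) → Spec R' is surjective. -/
open TensorProduct

/-!
A prime `p` lies in the image of `Spec S → Spec R` iff its fiber `κ(p) ⊗[R] S` is nonzero.
For `p'` in `Spec R'` lying over `p`, the fiber of `R' ⊗[R] S` over `p'` is
`κ(p') ⊗[R] S ≅ κ(p') ⊗[κ(p)] (κ(p) ⊗[R] S)`, which is nonzero because every nonzero module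
over the field `κ(p)` is faithfully flat.
-/

theorem Algebra.TensorProduct.nontrivial_of_algHom_field {R K L S : Type*} [CommRing R] [Field K]
    [CommRing L] [Nontrivial L] [CommRing S] [Algebra R K] [Algebra R L] [Algebra R S]
    (f : K →ₐ[R] L) [Nontrivial (K ⊗[R] S)] : Nontrivial (L ⊗[R] S) := by
  let _ : Algebra K L := f.toAlgebra
  have _ : IsScalarTower R K L := .of_algebraMap_eq fun r ↦ (f.commutes r).symm
  exact (Algebra.TensorProduct.cancelBaseChange R K L L S).symm.toRingEquiv.nontrivial

/-- Let `R → S` be a homomorphism of commutative rings inducing a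
surjective map `Spec S → Spec R`, and let `R → R'` be any homomorphism of commutative
rings.  Then the induced map `Spec (R' ⊗_R S) → Spec R'` is surjective. -/
theorem primeSpectrum_comap_surjective_of_baseChange
    (R S R' : Type) [CommRing R] [CommRing S] [CommRing R']
    [Algebra R S] [Algebra R R']
    (h : Function.Surjective (PrimeSpectrum.comap (algebraMap R S))) :
    Function.Surjective (PrimeSpectrum.comap (algebraMap R' (R' ⊗[R] S))) := by
  intro p'
  let p := PrimeSpectrum.comap (algebraMap R R') p'
  have : Nontrivial (p.asIdeal.ResidueField ⊗[R] S) :=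
    (PrimeSpectrum.nontrivial_iff_mem_rangeComap p).mpr (h p)
  have : Nontrivial (p'.asIdeal.ResidueField ⊗[R] S) :=
    Algebra.TensorProduct.nontrivial_of_algHom_field
      (Ideal.ResidueField.mapₐ p.asIdeal p'.asIdeal (Algebra.ofId R R') rfl)
  rw [← Set.mem_range, ← PrimeSpectrum.nontrivial_iff_mem_rangeComap]
  exact (Algebra.TensorProduct.cancelBaseChange R R' R' p'.asIdeal.ResidueField S).toRingEquiv
    |>.nontrivial
end

section
/- Let R be a commutative ring, P a finitely generated projective R-module, and x : P → P an R-linear map. Then P, with the R[X]-module structure in which X acts by x, is a finitely presented R[X]-module. -/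
/-!
`P_x` is the cokernel of `X - x : R[X] ⊗ P → R[X] ⊗ P`, the augmentation `p ⊗ m ↦ p(x) m` being
the quotient map. Base change makes `R[X] ⊗ P` finitely presented over `R[X]`, and the quotient of
a finitely presented module by a finitely generated submodule (here the image of `X - x`) is again
finitely presented.
-/

open Polynomial TensorProduct

namespace Module.AEval'

variable {R M : Type*} [CommRing R] [AddCommGroup M] [Module R M] (φ : M →ₗ[R] M)

noncomputable def augmentation : R[X] ⊗[R] M →ₗ[R[X]] AEval' φ :=
  LinearMap.liftBaseChange R[X] (AEval'.of φ).toLinearMap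

noncomputable def charMap : R[X] ⊗[R] M →ₗ[R[X]] R[X] ⊗[R] M :=
  (X : R[X]) • LinearMap.id - φ.baseChange R[X]

@[simp]
lemma augmentation_tmul (p : R[X]) (m : M) :
    augmentation φ (p ⊗ₜ m) = p • AEval'.of φ m := rfl

lemma charMap_one_tmul (m : M) :
    charMap φ (1 ⊗ₜ m) = (X : R[X]) ⊗ₜ m - 1 ⊗ₜ φ m := by
  simp [charMap, smul_tmul']

lemma augmentation_surjective : Function.Surjective (augmentation φ) := fun y ↦
  ⟨1 ⊗ₜ (AEval'.of φ).symm y, by simp⟩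

lemma augmentation_comp_charMap : augmentation φ ∘ₗ charMap φ = 0 := by
  ext m
  simp [charMap_one_tmul, AEval'.X_smul_of]

lemma X_smul_mkQ_one_tmul (m : M) :
    (X : R[X]) • (LinearMap.range (charMap φ)).mkQ (1 ⊗ₜ m) =
      (LinearMap.range (charMap φ)).mkQ (1 ⊗ₜ φ m) := by
  have h : (LinearMap.range (charMap φ)).mkQ ((X : R[X]) ⊗ₜ m - 1 ⊗ₜ φ m) = 0 := by
    rw [Submodule.mkQ_apply, Submodule.Quotient.mk_eq_zero, ← charMap_one_tmul]
    exact LinearMap.mem_range_self _ _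
  rwa [map_sub, sub_eq_zero, ← mul_one X, ← smul_eq_mul, ← smul_tmul', map_smul] at h

/-- The quotient map by the range of `charMap φ` factors through `augmentation φ`. -/
lemma ker_augmentation_le_range_charMap :
    LinearMap.ker (augmentation φ) ≤ LinearMap.range (charMap φ) := by
  set N := LinearMap.range (charMap φ)
  let g : AEval' φ →ₗ[R[X]] _ ⧸ N :=
    LinearMap.ofAEval φ (N.mkQ.restrictScalars R ∘ₗ TensorProduct.mk R R[X] M 1)
      fun m ↦ (X_smul_mkQ_one_tmul φ m).symm
  have hg : g ∘ₗ augmentation φ = N.mkQ := by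
    ext m
    exact congrArg g (one_smul R[X] (AEval'.of φ m))
  calc LinearMap.ker (augmentation φ) ≤ LinearMap.ker (g ∘ₗ augmentation φ) :=
        LinearMap.ker_le_ker_comp _ _
    _ = N := by rw [hg, Submodule.ker_mkQ]

theorem exact_charMap_augmentation : Function.Exact (charMap φ) (augmentation φ) :=
  LinearMap.exact_iff.mpr <| le_antisymm (ker_augmentation_le_range_charMap φ)
    (LinearMap.range_le_ker_iff.mpr (augmentation_comp_charMap φ))

instance finitePresentation [Module.FinitePresentation R M] :
    Module.FinitePresentation R[X] (AEval' φ) :=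
  Module.finitePresentation_of_surjective _ (augmentation_surjective φ) <| by
    rw [LinearMap.exact_iff.mp (exact_charMap_augmentation φ)]
    exact Submodule.fg_range _

end Module.AEval'

/-- Let `R` be a commutative ring, `P` a finitely generated projective
`R`-module, and `x : P → P` an `R`-linear map.  Then `P`, equipped with the `R[X]`-module
structure in which `X` acts by `x` (`Module.AEval' x`), is a finitely presented
`R[X]`-module. -/
theorem finitePresentation_polynomial_module_of_fg_projective
    (R : Type) [CommRing R]
    (P : Type) [AddCommGroup P] [Module R P]
    [Module.Finite R P] [Module.Projective R P]
    (x : P →ₗ[R] P) :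
    Module.FinitePresentation (Polynomial R) (Module.AEval' x) :=
  have := Module.finitePresentation_of_projective R P
  inferInstance
end

section
/- Let R be a commutative ring and S a commutative R-algebra such that S is a faithfully projective R-module (i.e., projective and a generator: R is a direct summand of a finite direct sum of copies of S). If F is an R-module such that S ⊗_R F is a projective S-module, then F is a projective R-module. -/
open TensorProduct

/-- Finsupp of a projective module is projective. -/
theorem aux_projective_finsupp (R : Type*) [Semiring R] (ι : Type*) (M : Type*)
    [AddCommMonoid M] [Module R M] [Module.Projective R M] :
    Module.Projective R (ι →₀ M) := by
  classical
  exact Module.Projective.of_equiv (finsuppLequivDFinsupp (R := R) (M := M) (ι := ι)).symm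

/-- Finite pi of a projective module is projective. -/
theorem aux_projective_pi (R : Type*) [Semiring R] (n : ℕ) (M : Type*)
    [AddCommMonoid M] [Module R M] [Module.Projective R M] :
    Module.Projective R (Fin n → M) := by
  haveI := aux_projective_finsupp R (Fin n) M
  exact Module.Projective.of_equiv (Finsupp.linearEquivFunOnFinite R M (Fin n))

/-- Transitivity of projectivity along restriction of scalars. -/
theorem aux_projective_trans (R S M : Type*) [CommRing R] [Ring S] [Algebra R S]
    [AddCommGroup M] [Module R M] [Module S M] [IsScalarTower R S M]
    [Module.Projective R S] [hM : Module.Projective S M] :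
    Module.Projective R M := by
  obtain ⟨i, hi⟩ := hM
  haveI : Module.Projective R (M →₀ S) := aux_projective_finsupp R M S
  refine Module.Projective.of_split (i.restrictScalars R)
    ((Finsupp.linearCombination S id).restrictScalars R) ?_
  ext x
  exact hi x

/-- Let `R` be a commutative ring and `S` a commutative `R`-algebra which
is a faithfully projective `R`-module: `S` is projective over `R` and `R` is a direct
summand of `Sⁿ` for some `n`.  If `F` is an `R`-module such that `S ⊗_R F` is a projective
`S`-module, then `F` is a projective `R`-module. -/
theorem projective_of_faithfully_projective_baseChange
    (R S : Type) [CommRing R] [CommRing S] [Algebra R S]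
    [Module.Projective R S]
    (hgen : ∃ (n : ℕ) (ι : R →ₗ[R] (Fin n → S)) (p : (Fin n → S) →ₗ[R] R),
      p ∘ₗ ι = LinearMap.id)
    (F : Type) [AddCommGroup F] [Module R F]
    (hproj : Module.Projective S (S ⊗[R] F)) :
    Module.Projective R F := by
  obtain ⟨n, ι, p, hpι⟩ := hgen
  -- `S ⊗[R] F` is projective over `R`
  haveI : Module.Projective R (S ⊗[R] F) := aux_projective_trans R S (S ⊗[R] F)
  -- hence so is `Fin n → S ⊗[R] F`
  haveI : Module.Projective R (Fin n → S ⊗[R] F) := aux_projective_pi R n (S ⊗[R] F)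
  -- `(Fin n → S) ⊗[R] F` is isomorphic to `Fin n → S ⊗[R] F`
  let e : (Fin n → S) ⊗[R] F ≃ₗ[R] (Fin n → S ⊗[R] F) :=
    (TensorProduct.comm R (Fin n → S) F) ≪≫ₗ
      (TensorProduct.piRight R R F (fun _ : Fin n => S)) ≪≫ₗ
      (LinearEquiv.piCongrRight (fun _ : Fin n => TensorProduct.comm R F S))
  haveI : Module.Projective R ((Fin n → S) ⊗[R] F) := Module.Projective.of_equiv e.symm
  -- `F` is a direct summand of `(Fin n → S) ⊗[R] F`
  refine Module.Projective.of_split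
    ((LinearMap.rTensor F ι) ∘ₗ (TensorProduct.lid R F).symm.toLinearMap)
    ((TensorProduct.lid R F).toLinearMap ∘ₗ (LinearMap.rTensor F p)) ?_
  ext x
  have h1 : p (ι 1) = 1 := by
    have := congrArg (fun f => f (1 : R)) hpι
    simpa using this
  simp [LinearMap.rTensor_tmul, h1]
end

section
/- Let R be a commutative ring, r ∈ R, and D_1 ← D_2 ← D_3 ← ⋯ a projective system of R-modules such that r^n annihilates D_n for every n ≥ 1. Then both lim_n D_n and lim^1_n D_n (the derived inverse limit) are r-contramodule R-modules, i.e., Hom_R(R[r^{-1}], −) and Ext^1_R(R[r^{-1}], −) vanish on them. -/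
open CategoryTheory

section

variable (R : Type) [CommRing R]
  (D : ℕ → Type) [∀ n, AddCommGroup (D n)] [∀ n, Module R (D n)]
  (f : ∀ n : ℕ, D (n + 1) →ₗ[R] D n)

/-- The inverse limit of the tower `D 0 ← D 1 ← D 2 ← ⋯`, realized as the submodule of
compatible families in the product. -/
def towerLim : Submodule R (∀ n, D n) where
  carrier := {g | ∀ n : ℕ, f n (g (n + 1)) = g n}
  add_mem' := by
    intro a b ha hb n
    simp only [Pi.add_apply, map_add, ha n, hb n]
  zero_mem' := by
    intro n
    simp
  smul_mem' := by
    intro c a ha n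
    simp only [Pi.smul_apply, map_smul, ha n]

/-- The map `∏ D_n → ∏ D_n`, `(x_n) ↦ (x_n − f_n(x_{n+1}))`, whose kernel is `lim D_n` and
whose cokernel is `lim¹ D_n`. -/
def towerDiff : (∀ n, D n) →ₗ[R] (∀ n, D n) where
  toFun g := fun n => g n - f n (g (n + 1))
  map_add' g h := by
    funext n
    simp only [Pi.add_apply, map_add]
    abel
  map_smul' c g := by
    funext n
    simp only [Pi.smul_apply, map_smul, smul_sub, RingHom.id_apply]

/-- The derived inverse limit `lim¹` of the tower `D 0 ← D 1 ← D 2 ← ⋯`, defined as the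
cokernel of the map `(x_n) ↦ (x_n − f_n(x_{n+1}))` on the product. -/
abbrev towerLim1 : Type :=
  (∀ n, D n) ⧸ LinearMap.range (towerDiff R D f)

end

/-!
`R[r⁻¹]` has the free resolution `0 → R^(ℕ) → R^(ℕ) → R[r⁻¹] → 0` given by
`eₙ ↦ eₙ - r eₙ₊₁` and `eₙ ↦ 1/rⁿ`. Applying `Hom(-, C)` identifies `Hom(R[r⁻¹], C)` and
`Ext¹(R[r⁻¹], C)` with the kernel and cokernel of `(cₙ) ↦ (cₙ - r cₙ₊₁)` on `C^ℕ`, so `C` is an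
`r`-contramodule as soon as this map is bijective. It is bijective on a module killed by a power
of `r` (the inverse is a finite geometric series), hence on `∏ Dₙ`; being natural, it remains
bijective on the kernel and the cokernel of any map between two modules on which it is bijective,
such as `lim Dₙ` and `lim¹ Dₙ`.
-/

universe u

section ContraDiff

variable {R : Type*} [CommRing R] (r : R)

def contraDiff (M : Type*) [AddCommGroup M] [Module R M] : (ℕ → M) →ₗ[R] (ℕ → M) where
  toFun c n := c n - r • c (n + 1)
  map_add' c d := by
    funext n
    simp only [Pi.add_apply, smul_add]
    abel
  map_smul' a c := by
    funext n
    simp only [Pi.smul_apply, smul_sub, smul_comm r a, RingHom.id_apply]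

@[simp]
lemma contraDiff_apply {M : Type*} [AddCommGroup M] [Module R M] (c : ℕ → M) (n : ℕ) :
    contraDiff r M c n = c n - r • c (n + 1) := rfl

variable {r}

lemma contraDiff_bijective_of_pow_smul_eq_zero {M : Type*} [AddCommGroup M] [Module R M]
    {k : ℕ} (hk : ∀ x : M, r ^ k • x = 0) : Function.Bijective (contraDiff r M) := by
  -- the inverse is the finite geometric series `c ↦ (∑_{i < k} r^i c_{n+i})_n`
  let inv : (ℕ → M) → (ℕ → M) := fun c n => ∑ i ∈ Finset.range k, r ^ i • c (n + i)
  have telescope : ∀ (c : ℕ → M) (n : ℕ),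
      ∑ i ∈ Finset.range k, (r ^ i • c (n + i) - r ^ (i + 1) • c (n + (i + 1))) = c n := by
    intro c n
    rw [Finset.sum_range_sub', hk, pow_zero, one_smul, add_zero, sub_zero]
  refine Function.bijective_iff_has_inverse.2 ⟨inv, fun c => ?_, fun c => ?_⟩ <;>
    funext n <;> rw [← telescope c n]
  · simp only [inv, contraDiff_apply, smul_sub, smul_smul, ← pow_succ, add_assoc]
  · simp only [inv, contraDiff_apply, Finset.smul_sum, ← Finset.sum_sub_distrib, smul_smul,
      ← pow_succ', add_assoc, add_comm 1]

lemma contraDiff_pi_bijective {ι : Type*} {M : ι → Type*} [∀ i, AddCommGroup (M i)]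
    [∀ i, Module R (M i)] (h : ∀ i, Function.Bijective (contraDiff r (M i))) :
    Function.Bijective (contraDiff r (∀ i, M i)) := by
  refine ⟨fun c d hcd => ?_, fun c => ?_⟩
  · funext n i
    have hi : (fun n => c n i) = fun n => d n i :=
      (h i).1 <| funext fun m => congrFun (congrFun hcd m) i
    exact congrFun hi n
  · choose b hb using fun i => (h i).2 (fun n => c n i)
    exact ⟨fun n i => b i n, funext fun n => funext fun i => congrFun (hb i) n⟩

section Naturality

variable {M N : Type*} [AddCommGroup M] [Module R M] [AddCommGroup N] [Module R N]
  (g : M →ₗ[R] N)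

lemma contraDiff_comp (c : ℕ → M) : contraDiff r N (g ∘ c) = g ∘ contraDiff r M c := by
  funext n
  simp

lemma contraDiff_ker_bijective (hM : Function.Bijective (contraDiff r M))
    (hN : Function.Injective (contraDiff r N)) :
    Function.Bijective (contraDiff r (LinearMap.ker g)) := by
  let ι := (LinearMap.ker g).subtype
  refine ⟨fun c d hcd => ?_, fun c => ?_⟩
  · have : ι ∘ c = ι ∘ d := hM.1 <| by rw [contraDiff_comp, contraDiff_comp, hcd]
    exact Subtype.val_injective.comp_left this
  · obtain ⟨b, hb⟩ := hM.2 (ι ∘ c)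
    have hgb : g ∘ b = 0 := hN <| by
      rw [contraDiff_comp, hb, map_zero]
      funext n
      exact (c n).2
    refine ⟨fun n => ⟨b n, congrFun hgb n⟩, funext fun n => Subtype.ext ?_⟩
    exact congrFun hb n

lemma contraDiff_quotient_range_bijective (hM : Function.Surjective (contraDiff r M))
    (hN : Function.Bijective (contraDiff r N)) :
    Function.Bijective (contraDiff r (N ⧸ LinearMap.range g)) := by
  let π := (LinearMap.range g).mkQ
  have hπ : Function.Surjective (π ∘ · : (ℕ → N) → ℕ → N ⧸ LinearMap.range g) :=
    (LinearMap.range g).mkQ_surjective.comp_left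
  refine ⟨(injective_iff_map_eq_zero _).2 fun c hc => ?_, fun c => ?_⟩
  · obtain ⟨c', rfl⟩ := hπ c
    have hmem : ∀ n, contraDiff r N c' n ∈ LinearMap.range g := fun n => by
      rw [← Submodule.Quotient.mk_eq_zero]
      exact congrFun ((contraDiff_comp π c').symm.trans hc) n
    choose m hm using hmem
    obtain ⟨b, rfl⟩ := hM m
    have hgb : g ∘ b = c' := hN.1 <| by rw [contraDiff_comp]; exact funext hm
    funext n
    simp [← hgb, π]
  · obtain ⟨c', rfl⟩ := hπ c
    obtain ⟨b, rfl⟩ := hN.2 c'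
    exact ⟨π ∘ b, contraDiff_comp π b⟩

end Naturality

end ContraDiff

noncomputable section Presentation

variable {R : Type*} [CommRing R] (r : R)

open Finsupp

def awayRelations : (ℕ →₀ R) →ₗ[R] (ℕ →₀ R) :=
  LinearMap.id - r • lmapDomain R R Nat.succ

def awayGenerators : (ℕ →₀ R) →ₗ[R] Localization.Away r :=
  linearCombination R fun n => Localization.mk 1 (Submonoid.pow r n)

lemma awayRelations_single (n : ℕ) (a : R) :
    awayRelations r (single n a) = single n a - r • single (n + 1) a := by
  simp [awayRelations]

lemma awayRelations_apply_zero (x : ℕ →₀ R) : awayRelations r x 0 = x 0 := by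
  simp [awayRelations, mapDomain_of_notMem_range _ _ (fun h => Nat.succ_ne_zero _ h.choose_spec)]

lemma awayRelations_apply_succ (x : ℕ →₀ R) (n : ℕ) :
    awayRelations r x (n + 1) = x (n + 1) - r * x n := by
  simp [awayRelations, ← Nat.succ_eq_add_one, mapDomain_apply Nat.succ_injective]

lemma awayRelations_injective : Function.Injective (awayRelations r) := by
  refine (injective_iff_map_eq_zero _).2 fun x hx => ?_
  suffices ∀ n, x n = 0 from Finsupp.ext this
  intro n
  induction n with
  | zero => simpa [awayRelations_apply_zero] using DFunLike.congr_fun hx 0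
  | succ n ih => simpa [awayRelations_apply_succ, ih] using DFunLike.congr_fun hx (n + 1)

lemma awayGenerators_single (n : ℕ) (a : R) :
    awayGenerators r (single n a) = Localization.mk a (Submonoid.pow r n) := by
  simp [awayGenerators, Localization.smul_mk]

lemma awayGenerators_comp_awayRelations : awayGenerators r ∘ₗ awayRelations r = 0 := by
  refine lhom_ext fun n a => ?_
  rw [LinearMap.comp_apply, awayRelations_single, map_sub, map_smul, awayGenerators_single,
    awayGenerators_single, Localization.smul_mk, LinearMap.zero_apply, sub_eq_zero,
    Localization.mk_eq_mk_iff, Localization.r_iff_exists]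
  exact ⟨1, by simp only [OneMemClass.coe_one, Submonoid.pow_coe, one_mul, smul_eq_mul]; ring⟩

lemma awayGenerators_surjective : Function.Surjective (awayGenerators r) := by
  intro z
  induction z using Localization.induction_on with
  | H p =>
    obtain ⟨a, s, n, rfl⟩ := p
    exact ⟨single n a, awayGenerators_single r n a⟩

lemma single_sub_single_mem_range_awayRelations (n j : ℕ) (a : R) :
    single n a - single (n + j) (r ^ j * a) ∈ LinearMap.range (awayRelations r) := by
  induction j with
  | zero => simp
  | succ j ih =>
    have : single n a - single (n + (j + 1)) (r ^ (j + 1) * a) =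
        (single n a - single (n + j) (r ^ j * a)) +
          awayRelations r (single (n + j) (r ^ j * a)) := by
      rw [awayRelations_single, smul_single, smul_eq_mul, ← mul_assoc, ← pow_succ', ← add_assoc]
      abel
    rw [this]
    exact add_mem ih (LinearMap.mem_range_self _ _)

lemma exists_sub_single_mem_range_awayRelations (x : ℕ →₀ R) :
    ∃ n a, x - single n a ∈ LinearMap.range (awayRelations r) := by
  induction x using Finsupp.induction with
  | zero => exact ⟨0, 0, by simp⟩
  | single_add n a x _ _ ih =>
    obtain ⟨m, b, hmb⟩ := ih
    -- move both `single n a` and `single m b` up to the common index `max n m`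
    refine ⟨max n m, r ^ (max n m - n) * a + r ^ (max n m - m) * b, ?_⟩
    have ha := single_sub_single_mem_range_awayRelations r n (max n m - n) a
    have hb := single_sub_single_mem_range_awayRelations r m (max n m - m) b
    rw [Nat.add_sub_cancel' (le_max_left n m)] at ha
    rw [Nat.add_sub_cancel' (le_max_right n m)] at hb
    convert add_mem (add_mem ha hmb) hb using 1
    rw [single_add]
    abel

lemma exact_awayRelations_awayGenerators :
    Function.Exact (awayRelations r) (awayGenerators r) := by
  refine fun x => ⟨fun hx => ?_, ?_⟩
  · obtain ⟨n, a, hna⟩ := exists_sub_single_mem_range_awayRelations r x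
    have hzero : Localization.mk a (Submonoid.pow r n) = 0 := by
      obtain ⟨y, hy⟩ := hna
      have := DFunLike.congr_fun (awayGenerators_comp_awayRelations r) y
      rwa [LinearMap.comp_apply, hy, map_sub, hx, awayGenerators_single, zero_sub,
        LinearMap.zero_apply, neg_eq_zero] at this
    rw [Localization.mk_eq_mk'_apply, IsLocalization.mk'_eq_zero_iff] at hzero
    obtain ⟨⟨_, j, rfl⟩, hj⟩ := hzero
    have hsplit : x = (x - single n a) + (single n a - single (n + j) (r ^ j * a)) := by
      rw [hj, single_zero]
      abel
    rw [hsplit]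
    exact add_mem hna (single_sub_single_mem_range_awayRelations r n j a)
  · rintro ⟨y, rfl⟩
    exact DFunLike.congr_fun (awayGenerators_comp_awayRelations r) y

end Presentation

noncomputable section Resolution

open Limits

variable {R : Type u} [CommRing R] (r : R)

def awayResolutionX : ℕ → ModuleCat.{u} R
  | 0 | 1 => ModuleCat.of R (ℕ →₀ R)
  | _ + 2 => ModuleCat.of R PUnit

def awayResolutionD : ∀ n, awayResolutionX (R := R) (n + 1) ⟶ awayResolutionX n
  | 0 => ModuleCat.ofHom (awayRelations r)
  | _ + 1 => 0

def awayResolutionComplex : ChainComplex (ModuleCat.{u} R) ℕ :=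
  ChainComplex.of awayResolutionX (awayResolutionD r) fun _ => zero_comp

instance (n : ℕ) : Projective ((awayResolutionComplex r).X n) := by
  match n with
  | 0 | 1 | _ + 2 => exact (IsProjective.iff_projective _).1 inferInstance

lemma awayResolutionComplex_d_one_zero :
    (awayResolutionComplex r).d 1 0 = ModuleCat.ofHom (awayRelations r) :=
  rfl

def awayResolutionπ :
    awayResolutionComplex r ⟶ (ChainComplex.single₀ _).obj (ModuleCat.of R (Localization.Away r)) :=
  (ChainComplex.toSingle₀Equiv _ _).symm ⟨ModuleCat.ofHom (awayGenerators r), by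
    rw [awayResolutionComplex_d_one_zero]
    ext x
    exact DFunLike.congr_fun (awayGenerators_comp_awayRelations r) x⟩

lemma awayResolutionπ_f_zero : (awayResolutionπ r).f 0 = ModuleCat.ofHom (awayGenerators r) :=
  ChainComplex.toSingle₀Equiv_symm_apply_f_zero _ _

def awayResolution : ProjectiveResolution (ModuleCat.of R (Localization.Away r)) where
  complex := awayResolutionComplex r
  π := awayResolutionπ r
  quasiIso := ⟨fun n => by
    match n with
    | 0 =>
      rw [ChainComplex.quasiIsoAt₀_iff, ShortComplex.quasiIso_iff_of_zeros' _ rfl rfl rfl]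
      have hτ : ((HomologicalComplex.shortComplexFunctor' _ _ 1 0 0).map
          (awayResolutionπ r)).τ₂ = ModuleCat.ofHom (awayGenerators r) := awayResolutionπ_f_zero r
      refine ⟨?_, ?_⟩
      · rw [ShortComplex.moduleCat_exact_iff]
        intro x hx
        have hx' : ModuleCat.ofHom (awayGenerators r) x = 0 := by rw [← hτ]; exact hx
        exact (exact_awayRelations_awayGenerators r x).1 hx'
      · rw [hτ]
        exact (ModuleCat.epi_iff_surjective _).2 (awayGenerators_surjective r)
    | n + 1 =>
      rw [quasiIsoAt_iff_exactAt' (hL := ChainComplex.exactAt_succ_single_obj ..),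
        HomologicalComplex.exactAt_iff' _ (n + 2) (n + 1) n (by simp) (by simp),
        ShortComplex.moduleCat_exact_iff]
      match n with
      | 0 =>
        intro x hx
        exact ⟨0, (awayRelations_injective r (hx.trans (map_zero _).symm)).symm ▸ map_zero _⟩
      | _ + 1 =>
        exact fun _ _ => ⟨0, Subsingleton.elim (α := PUnit) _ _⟩⟩

end Resolution

section Contramodule

open Limits Finsupp

variable {R : Type u} [CommRing R] (r : R)

def IsContramodule (C : Type u) [AddCommGroup C] [Module R C] : Prop :=
  Subsingleton (Localization.Away r →ₗ[R] C) ∧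
    Subsingleton (((Ext R (ModuleCat.{u} R) 1).obj
      (Opposite.op (ModuleCat.of R (Localization.Away r)))).obj (ModuleCat.of R C))

variable {r} {C : Type u} [AddCommGroup C] [Module R C]

lemma linearCombination_comp_awayRelations (c : ℕ → C) :
    linearCombination R c ∘ₗ awayRelations r = linearCombination R (contraDiff r C c) := by
  refine lhom_ext fun n a => ?_
  rw [LinearMap.comp_apply, awayRelations_single, map_sub, map_smul, linearCombination_single,
    linearCombination_single, linearCombination_single, contraDiff_apply, smul_sub, smul_comm a r]

lemma linearCombination_map_single_one (φ : (ℕ →₀ R) →ₗ[R] C) :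
    linearCombination R (fun n => φ (single n 1)) = φ :=
  lhom_ext fun n a => by simp [← map_smul]

lemma subsingleton_linearMap_away (h : Function.Injective (contraDiff r C)) :
    Subsingleton (Localization.Away r →ₗ[R] C) := by
  suffices hzero : ∀ χ : Localization.Away r →ₗ[R] C, χ = 0 from
    ⟨fun χ ψ => (hzero χ).trans (hzero ψ).symm⟩
  intro χ
  have hcomp : χ ∘ₗ awayGenerators r =
      linearCombination R (fun n => χ (Localization.mk 1 (Submonoid.pow r n))) :=
    (linearCombination_linear_comp R χ).symm
  have hgen : contraDiff r C (fun n => χ (Localization.mk 1 (Submonoid.pow r n))) = 0 := by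
    have := congr(χ ∘ₗ $(awayGenerators_comp_awayRelations r))
    rw [← LinearMap.comp_assoc, hcomp, linearCombination_comp_awayRelations,
      LinearMap.comp_zero] at this
    funext n
    simpa using DFunLike.congr_fun this (single n 1)
  rw [← map_zero (contraDiff r C)] at hgen
  rw [h hgen, linearCombination_zero] at hcomp
  ext z
  obtain ⟨x, rfl⟩ := awayGenerators_surjective r z
  exact DFunLike.congr_fun hcomp x

lemma subsingleton_ext_one_away (h : Function.Surjective (contraDiff r C)) :
    Subsingleton (((Ext R (ModuleCat.{u} R) 1).obj
      (Opposite.op (ModuleCat.of R (Localization.Away r)))).obj (ModuleCat.of R C)) := by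
  refine ModuleCat.subsingleton_of_isZero (IsZero.of_iso ?_ ((awayResolution r).isoExt 1 _))
  rw [← HomologicalComplex.exactAt_iff_isZero_homology,
    HomologicalComplex.exactAt_iff' _ 0 1 2 (by simp) (by simp), ShortComplex.moduleCat_exact_iff]
  intro φ _
  obtain ⟨c, hc⟩ := h fun n => φ.hom (single n 1)
  refine ⟨ModuleCat.ofHom (linearCombination R c), ModuleCat.hom_ext ?_⟩
  change linearCombination R c ∘ₗ awayRelations r = φ.hom
  rw [linearCombination_comp_awayRelations, hc]
  exact linearCombination_map_single_one _

lemma isContramodule_of_bijective (h : Function.Bijective (contraDiff r C)) :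
    IsContramodule r C :=
  ⟨subsingleton_linearMap_away h.1, subsingleton_ext_one_away h.2⟩

end Contramodule

lemma towerLim_eq_ker {R : Type} [CommRing R] {D : ℕ → Type} [∀ n, AddCommGroup (D n)]
    [∀ n, Module R (D n)] (f : ∀ n : ℕ, D (n + 1) →ₗ[R] D n) :
    towerLim R D f = LinearMap.ker (towerDiff R D f) := by
  ext g
  simp only [LinearMap.mem_ker, funext_iff]
  exact forall_congr' fun n => eq_comm.trans sub_eq_zero.symm

/-- Let `R` be a commutative ring, `r ∈ R`, and `D_1 ← D_2 ← ⋯` a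
projective system of `R`-modules such that `rⁿ` annihilates `D_n` for every `n ≥ 1`
(here `D n` denotes `D_{n+1}`, so `r^(n+1)` annihilates `D n`).  Then both `lim_n D_n` and
`lim¹_n D_n` are `r`-contramodule `R`-modules: `Hom_R(R[r⁻¹], −)` and `Ext¹_R(R[r⁻¹], −)`
vanish on them. -/
theorem towerLim_and_towerLim1_are_contramodules
    (R : Type) [CommRing R] (r : R)
    (D : ℕ → Type) [∀ n, AddCommGroup (D n)] [∀ n, Module R (D n)]
    (f : ∀ n : ℕ, D (n + 1) →ₗ[R] D n)
    (hann : ∀ (n : ℕ) (x : D n), r ^ (n + 1) • x = 0) :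
    Subsingleton (Localization.Away r →ₗ[R] (towerLim R D f)) ∧
    Subsingleton (((Ext R (ModuleCat R) 1).obj
      (Opposite.op (ModuleCat.of R (Localization.Away r)))).obj
        (ModuleCat.of R (towerLim R D f))) ∧
    Subsingleton (Localization.Away r →ₗ[R] (towerLim1 R D f)) ∧
    Subsingleton (((Ext R (ModuleCat R) 1).obj
      (Opposite.op (ModuleCat.of R (Localization.Away r)))).obj
        (ModuleCat.of R (towerLim1 R D f))) := by
  have hprod : Function.Bijective (contraDiff r (∀ n, D n)) :=
    contraDiff_pi_bijective fun n => contraDiff_bijective_of_pow_smul_eq_zero (hann n)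
  have hlim : IsContramodule r (towerLim R D f) := by
    rw [towerLim_eq_ker]
    exact isContramodule_of_bijective (contraDiff_ker_bijective _ hprod hprod.1)
  have hlim1 : IsContramodule r (towerLim1 R D f) :=
    isContramodule_of_bijective (contraDiff_quotient_range_bijective _ hprod.2 hprod)
  exact ⟨hlim.1, hlim.2, hlim1.1, hlim1.2⟩
end

section
/- Let R be a commutative ring, r ∈ R, and C an R-module with Hom_R(R[r^{-1}], C) = 0 = Ext^1_R(R[r^{-1}], C) (an r-contramodule). Then the ideal h_r(R) ⊆ R consisting of the maximal r-divisible submodule of R (the set of elements lying in ∩ of images of multiplication-by-r iterated, i.e., the largest submodule D with rD = D) annihilates C, so C is naturally an R/h_r(R)-module. -/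
/-!
An element `a` of the maximal `r`-divisible ideal has a chain of `r`-th roots
`a = a₀, aₙ = r aₙ₊₁` inside `R`. For `c : C` the elements `aₙ • c` then define an `R`-linear map
`R[r⁻¹] → C`, `1 / rⁿ ↦ aₙ • c`, which vanishes because `Hom_R(R[r⁻¹], C) = 0`; evaluating at
`1` gives `a • c = 0`. The map is built through the presentation `R[r⁻¹] ≅ R[X] / (rX - 1)`.
-/

open Polynomial

section

variable {R M : Type*} [CommRing R] [AddCommGroup M] [Module R M] {r : R}

theorem Submodule.exists_eq_smul_of_mem_sSup {S : Set (Submodule R M)}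
    (hS : ∀ N ∈ S, ∀ x ∈ N, ∃ y ∈ N, x = r • y) :
    ∀ x ∈ sSup S, ∃ y ∈ sSup S, x = r • y := by
  suffices sSup S ≤ (sSup S).map (r • LinearMap.id) by
    intro x hx
    obtain ⟨y, hy, rfl⟩ := this hx
    exact ⟨y, hy, rfl⟩
  refine sSup_le fun N hN x hx ↦ ?_
  obtain ⟨y, hy, rfl⟩ := hS N hN x hx
  exact ⟨y, le_sSup hN hy, rfl⟩

theorem exists_seq_eq_smul_succ {s : Set M} (hs : ∀ x ∈ s, ∃ y ∈ s, x = r • y) {a : M}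
    (ha : a ∈ s) : ∃ b : ℕ → M, b 0 = a ∧ ∀ n, b n = r • b (n + 1) := by
  choose root hroot using fun x : s ↦ hs x x.2
  let next : s → s := fun x ↦ ⟨root x, (hroot x).1⟩
  refine ⟨fun n ↦ (next^[n] ⟨a, ha⟩ : M), rfl, fun n ↦ ?_⟩
  simp only [Function.iterate_succ_apply']
  exact (hroot _).2

variable {b : ℕ → M}

theorem Polynomial.lsum_toSpanSingleton_mul_C_mul_X_sub_one (hb : ∀ n, b n = r • b (n + 1))
    (q : R[X]) : lsum (fun n ↦ LinearMap.toSpanSingleton R M (b n)) (q * (C r * X - 1)) = 0 := by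
  induction q using Polynomial.induction_on' with
  | add p q hp hq => rw [add_mul, map_add, hp, hq, add_zero]
  | monomial n a =>
    have hmul : monomial n a * (C r * X - 1) = monomial (n + 1) (a * r) - monomial n a := by
      rw [← C_mul_X_pow_eq_monomial, ← C_mul_X_pow_eq_monomial, pow_succ, C_mul]
      ring
    rw [hmul, map_sub, lsum_apply, lsum_apply, sum_monomial_index _ _ (by simp),
      sum_monomial_index _ _ (by simp)]
    simp [hb n, mul_smul]

theorem Localization.Away.exists_linearMap_apply_one_eq (hb : ∀ n, b n = r • b (n + 1)) :
    ∃ f : Localization.Away r →ₗ[R] M, f 1 = b 0 := by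
  let π : R[X] →ₗ[R] Localization.Away r :=
    ((Localization.awayEquivAdjoin r).symm.toAlgHom.comp (AdjoinRoot.mkₐ _)).toLinearMap
  have hπ : Function.Surjective π :=
    (Localization.awayEquivAdjoin r).symm.surjective.comp AdjoinRoot.mk_surjective
  let ψ : R[X] →ₗ[R] M := lsum fun n ↦ LinearMap.toSpanSingleton R M (b n)
  have hker : LinearMap.ker π ≤ LinearMap.ker ψ := by
    intro p hp
    obtain ⟨q, rfl⟩ : C r * X - 1 ∣ p := by
      simpa [π, ← AdjoinRoot.mk_eq_zero] using hp
    rw [mul_comm]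
    exact lsum_toSpanSingleton_mul_C_mul_X_sub_one hb q
  refine ⟨(LinearMap.ker π).liftQ ψ hker ∘ₗ (π.quotKerEquivOfSurjective hπ).symm.toLinearMap, ?_⟩
  have hπ1 : π 1 = 1 := by simp [π]
  rw [← hπ1, LinearMap.comp_apply, LinearEquiv.coe_coe,
    LinearMap.quotKerEquivOfSurjective_symm_apply, Submodule.liftQ_apply, ← C_1]
  simp only [ψ, lsum_apply, LinearMap.toSpanSingleton_apply]
  rw [sum_C_index (zero_smul R _), one_smul]

theorem eq_zero_of_eq_smul_succ (h : Subsingleton (Localization.Away r →ₗ[R] M))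
    (hb : ∀ n, b n = r • b (n + 1)) : b 0 = 0 := by
  obtain ⟨f, hf⟩ := Localization.Away.exists_linearMap_apply_one_eq hb
  rw [← hf, Subsingleton.elim f 0, LinearMap.zero_apply]

end

theorem divisible_ideal_annihilates_contramodule_general
    (R : Type) [CommRing R] (r : R)
    (C : Type) [AddCommGroup C] [Module R C]
    (h0 : Subsingleton (Localization.Away r →ₗ[R] C)) :
    ∀ a ∈ sSup {I : Ideal R | ∀ x ∈ I, ∃ y ∈ I, x = r * y}, ∀ c : C, a • c = 0 := by
  intro a ha c
  obtain ⟨roots, rfl, hroots⟩ :=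
    exists_seq_eq_smul_succ (Submodule.exists_eq_smul_of_mem_sSup fun _ hI ↦ hI) ha
  exact eq_zero_of_eq_smul_succ h0 (b := fun n ↦ roots n • c) fun n ↦ by
    rw [hroots n, smul_eq_mul, mul_smul]

/-- Let `R` be a commutative ring, `r ∈ R`, and `C` an `R`-module with
`Hom_R(R[r⁻¹], C) = 0 = Ext¹_R(R[r⁻¹], C)` (an `r`-contramodule).  Then the ideal
`h_r(R) ⊆ R`, the maximal `r`-divisible submodule of `R` (the sum of all ideals `I` with
`rI = I`), annihilates `C`; so `C` is naturally an `R/h_r(R)`-module. -/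
theorem divisible_ideal_annihilates_contramodule
    (R : Type) [CommRing R] (r : R)
    (C : Type) [AddCommGroup C] [Module R C]
    (h0 : Subsingleton (Localization.Away r →ₗ[R] C))
    (h1 : Subsingleton (((Ext R (ModuleCat R) 1).obj
      (Opposite.op (ModuleCat.of R (Localization.Away r)))).obj (ModuleCat.of R C))) :
    ∀ a ∈ sSup {I : Ideal R | ∀ x ∈ I, ∃ y ∈ I, x = r * y}, ∀ c : C, a • c = 0 :=
  divisible_ideal_annihilates_contramodule_general R r C h0
end
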